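/- arXiv:1701.04105 — 3 statements merged into one kernel-verified Lean document; each statement's English description precedes it below -/
import Mathlib

section
/- Let k ∈ {5,6}, let G be a star k-critical subcubic simple graph, and let x be a vertex of degree 2 with N_G(x) = {z, w}, where d_G(z) ≤ d_G(w). Suppose d_G(z) = 2 and let z* be the neighbor of z other than x. If z* and w are adjacent in G, then k = 5, d_G(z*) = d_G(w) = 3, and every vertex u ∈ (N_G[w] ∪ N_G[z*]) \ {x, z} has degree 3 in G. -/
open SimpleGraph

/-- A star `k`-edge-coloring of `G`: a proper edge-coloring (adjacent edges get
distinct colors) such that no path or cycle of length four is bicolored, i.e.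
no walk on four pairwise-distinct edges has its first and third edges equally
colored and its second and fourth edges equally colored. -/
def IsStarEdgeColoring {V : Type*} (G : SimpleGraph V) (k : ℕ)
    (c : Sym2 V → Fin k) : Prop :=
  (∀ e₁ ∈ G.edgeSet, ∀ e₂ ∈ G.edgeSet, e₁ ≠ e₂ → (∃ v, v ∈ e₁ ∧ v ∈ e₂) →
      c e₁ ≠ c e₂) ∧
  (∀ v₀ v₁ v₂ v₃ v₄ : V, G.Adj v₀ v₁ → G.Adj v₁ v₂ → G.Adj v₂ v₃ → G.Adj v₃ v₄ →
    ([s(v₀, v₁), s(v₁, v₂), s(v₂, v₃), s(v₃, v₄)] : List (Sym2 V)).Pairwise (· ≠ ·) →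
    ¬(c s(v₀, v₁) = c s(v₂, v₃) ∧ c s(v₁, v₂) = c s(v₃, v₄)))

/-- `G` admits a star `k`-edge-coloring; equivalently, `χ'_s(G) ≤ k`. -/
def StarEdgeColorable {V : Type*} (G : SimpleGraph V) (k : ℕ) : Prop :=
  ∃ c : Sym2 V → Fin k, IsStarEdgeColoring G k c

/-- The graph `G - x` obtained from `G` by deleting the vertex `x`
(keeping the ambient vertex type; `x` becomes isolated, which does not affect
edge-colorings). -/
def SimpleGraph.deleteVert {V : Type*} (G : SimpleGraph V) (x : V) : SimpleGraph V where
  Adj u w := G.Adj u w ∧ u ≠ x ∧ w ≠ x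
  symm := ⟨fun u w h => ⟨h.1.symm, h.2.2, h.2.1⟩⟩
  loopless := ⟨fun u h => G.loopless.irrefl u h.1⟩

/-- `G` is star `k`-critical: `χ'_s(G) > k` but `χ'_s(G - v) ≤ k` for every vertex `v`. -/
def StarCritical {V : Type*} (G : SimpleGraph V) (k : ℕ) : Prop :=
  ¬ StarEdgeColorable G k ∧ ∀ v : V, StarEdgeColorable (G.deleteVert v) k

/-- The set of colors used by `c` on edges of `H` incident with `u`. -/
def colorsAt {V : Type*} (H : SimpleGraph V) {k : ℕ} (c : Sym2 V → Fin k) (u : V) :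
    Set (Fin k) :=
  {a | ∃ w, H.Adj u w ∧ c s(u, w) = a}

/-!
Both `x` and `z` have degree 2 and lie on the 4-cycle `x z z* w`. Delete one of them, `v`; let `p`
be the other degree-2 vertex, `q` the other neighbor of `v` and `r` the fourth vertex of the cycle,
and star-color `G - v`. The edges `vq` and `vp` can be colored back as soon as the color of `vq`
avoids the colors at `q`, those at `r` away from the cycle, and those on the edges at distance one
from `q` off the cycle; the color of `vp` then has at most four colors to avoid. In a subcubic
graph the first list has at most `(d(q) - 1) + (d(r) - 2) + 2 (d(q) - 2) ≤ 5` colors, with equality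
only if every vertex involved has degree 3. Criticality forbids both extensions, which forces
`k = 5` and the degree conditions.
-/

namespace SimpleGraph

variable {V : Type*} {G : SimpleGraph V}

/-- The last conjunct excludes running twice along the edge `u₀ u₁` of a triangle. -/
lemma Adj.pairwise_ne_edges_iff {u₀ u₁ u₂ u₃ u₄ : V} (h₀₁ : G.Adj u₀ u₁) (h₁₂ : G.Adj u₁ u₂)
    (h₂₃ : G.Adj u₂ u₃) (h₃₄ : G.Adj u₃ u₄) :
    ([s(u₀, u₁), s(u₁, u₂), s(u₂, u₃), s(u₃, u₄)] : List (Sym2 V)).Pairwise (· ≠ ·) ↔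
      u₀ ≠ u₂ ∧ u₁ ≠ u₃ ∧ u₂ ≠ u₄ ∧ ¬(u₃ = u₀ ∧ u₄ = u₁) := by
  have := h₀₁.ne; have := h₁₂.ne; have := h₂₃.ne; have := h₃₄.ne
  simp only [ne_eq, List.pairwise_cons, List.mem_cons, List.not_mem_nil, or_false,
    forall_eq_or_imp, Sym2.eq, Sym2.rel_iff', Prod.mk.injEq, Prod.swap_prod_mk, and_true, not_or,
    not_and, forall_eq, IsEmpty.forall_iff, implies_true, List.Pairwise.nil, and_self]
  grind

end SimpleGraph

section StarEdgeColoring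

variable {V : Type*} {G : SimpleGraph V} {k : ℕ} {v p q : V}

theorem isStarEdgeColoring_iff {c : Sym2 V → Fin k} :
    IsStarEdgeColoring G k c ↔
      (∀ ⦃u y t⦄, G.Adj u y → G.Adj u t → y ≠ t → c s(u, y) ≠ c s(u, t)) ∧
      ∀ ⦃u₀ u₁ u₂ u₃ u₄⦄, G.Adj u₀ u₁ → G.Adj u₁ u₂ → G.Adj u₂ u₃ → G.Adj u₃ u₄ →
        u₀ ≠ u₂ → u₁ ≠ u₃ → u₂ ≠ u₄ →
        ¬(c s(u₀, u₁) = c s(u₂, u₃) ∧ c s(u₁, u₂) = c s(u₃, u₄)) := by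
  constructor
  · rintro ⟨hproper, hstar⟩
    have hproper' : ∀ ⦃u y t⦄, G.Adj u y → G.Adj u t → y ≠ t → c s(u, y) ≠ c s(u, t) :=
      fun u y t hy ht hyt => hproper _ hy _ ht (mt Sym2.congr_right.mp hyt) ⟨u, by simp, by simp⟩
    refine ⟨hproper', fun u₀ u₁ u₂ u₃ u₄ h₀₁ h₁₂ h₂₃ h₃₄ h₀₂ h₁₃ h₂₄ ⟨e₁, e₂⟩ => ?_⟩
    by_cases hback : u₃ = u₀ ∧ u₄ = u₁
    · obtain ⟨rfl, rfl⟩ := hback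
      exact hproper' h₀₁ h₂₃.symm h₁₂.ne (e₁.trans (congrArg c Sym2.eq_swap))
    · exact hstar u₀ u₁ u₂ u₃ u₄ h₀₁ h₁₂ h₂₃ h₃₄
        ((h₀₁.pairwise_ne_edges_iff h₁₂ h₂₃ h₃₄).2 ⟨h₀₂, h₁₃, h₂₄, hback⟩) ⟨e₁, e₂⟩
  · rintro ⟨hproper, hstar⟩
    refine ⟨?_, fun u₀ u₁ u₂ u₃ u₄ h₀₁ h₁₂ h₂₃ h₃₄ hdist => ?_⟩
    · rintro e₁ he₁ e₂ he₂ hne ⟨u, hu₁, hu₂⟩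
      obtain ⟨y, rfl⟩ := Sym2.mem_iff_exists.mp hu₁
      obtain ⟨t, rfl⟩ := Sym2.mem_iff_exists.mp hu₂
      exact hproper he₁ he₂ (by rintro rfl; exact hne rfl)
    · obtain ⟨h₀₂, h₁₃, h₂₄, -⟩ := (h₀₁.pairwise_ne_edges_iff h₁₂ h₂₃ h₃₄).1 hdist
      exact hstar h₀₁ h₁₂ h₂₃ h₃₄ h₀₂ h₁₃ h₂₄

/-- Together with the same statement for `q`, this covers every walk meeting `v` among its
first three vertices. -/
lemma degreeTwoExtension_not_bicolored {c c' : Sym2 V → Fin k} {a b : Fin k}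
    (hN : ∀ u, G.Adj v u ↔ u = p ∨ u = q)
    (hva : c' s(v, p) = a) (hvb : c' s(v, q) = b)
    (hc' : ∀ ⦃x y⦄, x ≠ v → y ≠ v → c' s(x, y) = c s(x, y)) (hab : a ≠ b)
    (hqy : ∀ ⦃y t⦄, (G.deleteVert v).Adj q y → (G.deleteVert v).Adj y t →
      ¬(c s(q, y) = a ∧ c s(y, t) = b))
    (hpy : ∀ ⦃y t⦄, (G.deleteVert v).Adj p y → (G.deleteVert v).Adj y t →
      ¬(c s(p, y) = b ∧ c s(y, t) = a))
    (hmid : ∀ ⦃y t⦄, (G.deleteVert v).Adj p y → (G.deleteVert v).Adj q t →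
      ¬(c s(p, y) = b ∧ c s(q, t) = a))
    (hpyt : ∀ ⦃y t s⦄, (G.deleteVert v).Adj p y → (G.deleteVert v).Adj y t →
      (G.deleteVert v).Adj t s → t ≠ p → s ≠ y → ¬(c s(y, t) = a ∧ c s(p, y) = c s(t, s)))
    {u₀ u₁ u₂ u₃ u₄ : V} (h₀₁ : G.Adj u₀ u₁) (h₁₂ : G.Adj u₁ u₂) (h₂₃ : G.Adj u₂ u₃)
    (h₃₄ : G.Adj u₃ u₄) (h₀₂ : u₀ ≠ u₂) (h₁₃ : u₁ ≠ u₃) (h₂₄ : u₂ ≠ u₄)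
    (hpos : u₀ = v ∧ u₁ = p ∨ u₁ = v ∧ u₀ = p ∨ u₂ = v ∧ u₁ = p) :
    ¬(c' s(u₀, u₁) = c' s(u₂, u₃) ∧ c' s(u₁, u₂) = c' s(u₃, u₄)) := by
  have hc'pv : c' s(p, v) = a := Sym2.eq_swap ▸ hva
  have hc'qv : c' s(q, v) = b := Sym2.eq_swap ▸ hvb
  have hpv : p ≠ v := (G.ne_of_adj ((hN p).2 (.inl rfl))).symm
  have hqv : q ≠ v := (G.ne_of_adj ((hN q).2 (.inr rfl))).symm
  rintro ⟨e₁, e₂⟩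
  rcases hpos with ⟨rfl, rfl⟩ | ⟨rfl, rfl⟩ | ⟨rfl, rfl⟩
  · -- the walk `v p u₂ u₃ u₄`
    have hu₂ : u₂ ≠ u₀ := h₀₂.symm
    by_cases hu₃ : u₃ = u₀
    · subst hu₃
      obtain rfl | rfl := (hN u₂).1 h₂₃.symm
      · exact h₁₂.ne rfl
      obtain rfl | rfl := (hN u₄).1 h₃₄
      · exact hab (hva ▸ hc'qv ▸ e₁)
      · exact h₂₄ rfl
    by_cases hu₄ : u₄ = u₀
    · subst hu₄
      obtain rfl | rfl := (hN u₃).1 h₃₄.symm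
      · exact h₁₃ rfl
      rw [hva, hc' hu₂ hqv] at e₁
      rw [hc' hpv hu₂, hc'qv] at e₂
      exact hpy ⟨h₁₂, hpv, hu₂⟩ ⟨h₂₃, hu₂, hqv⟩ ⟨e₂, e₁.symm⟩
    rw [hva, hc' hu₂ hu₃] at e₁
    rw [hc' hpv hu₂, hc' hu₃ hu₄] at e₂
    exact hpyt ⟨h₁₂, hpv, hu₂⟩ ⟨h₂₃, hu₂, hu₃⟩ ⟨h₃₄, hu₃, hu₄⟩ (Ne.symm h₁₃) (Ne.symm h₂₄)
      ⟨e₁.symm, e₂⟩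
  · -- the walk `p v u₂ u₃ u₄`
    obtain rfl | rfl := (hN u₂).1 h₁₂
    · exact h₀₂ rfl
    have hu₃ : u₃ ≠ u₁ := Ne.symm h₁₃
    by_cases hu₄ : u₄ = u₁
    · subst hu₄
      obtain rfl | rfl := (hN u₃).1 h₃₄.symm
      · exact hab (hc'pv ▸ hvb ▸ e₂.symm)
      · exact h₂₃.ne rfl
    rw [hc'pv, hc' hqv hu₃] at e₁
    rw [hvb, hc' hu₃ hu₄] at e₂
    exact hqy ⟨h₂₃, hqv, hu₃⟩ ⟨h₃₄, hu₃, hu₄⟩ ⟨e₁.symm, e₂.symm⟩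
  · -- the walk `u₀ p v u₃ u₄`
    obtain rfl | rfl := (hN u₃).1 h₂₃
    · exact h₁₃ rfl
    have hu₀ : u₀ ≠ u₂ := h₀₂
    have hu₄ : u₄ ≠ u₂ := Ne.symm h₂₄
    rw [hc' hu₀ hpv, hvb] at e₁
    rw [hc'pv, hc' hqv hu₄] at e₂
    exact hmid ⟨h₀₁.symm, hpv, hu₀⟩ ⟨h₃₄, hqv, hu₄⟩ ⟨Sym2.eq_swap ▸ e₁, e₂.symm⟩

theorem IsStarEdgeColoring.of_deleteVert {c c' : Sym2 V → Fin k}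
    (hc : IsStarEdgeColoring (G.deleteVert v) k c)
    (hc' : ∀ ⦃x y⦄, x ≠ v → y ≠ v → c' s(x, y) = c s(x, y))
    (hv : ∀ ⦃y t⦄, G.Adj v y → G.Adj v t → y ≠ t → c' s(v, y) ≠ c' s(v, t))
    (hnbr : ∀ ⦃u t⦄, G.Adj u v → G.Adj u t → t ≠ v → c' s(u, v) ≠ c' s(u, t))
    (hfront : ∀ ⦃u₀ u₁ u₂ u₃ u₄⦄, G.Adj u₀ u₁ → G.Adj u₁ u₂ → G.Adj u₂ u₃ → G.Adj u₃ u₄ →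
      u₀ ≠ u₂ → u₁ ≠ u₃ → u₂ ≠ u₄ → (u₀ = v ∨ u₁ = v ∨ u₂ = v) →
      ¬(c' s(u₀, u₁) = c' s(u₂, u₃) ∧ c' s(u₁, u₂) = c' s(u₃, u₄))) :
    IsStarEdgeColoring G k c' := by
  obtain ⟨hproper, hstar⟩ := isStarEdgeColoring_iff.1 hc
  refine isStarEdgeColoring_iff.2 ⟨fun u y t hy ht hyt => ?_,
    fun u₀ u₁ u₂ u₃ u₄ h₀₁ h₁₂ h₂₃ h₃₄ h₀₂ h₁₃ h₂₄ ⟨e₁, e₂⟩ => ?_⟩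
  · by_cases hu : u = v
    · exact hu ▸ hv (hu ▸ hy) (hu ▸ ht) hyt
    by_cases hyv : y = v
    · exact hyv ▸ hnbr (hyv ▸ hy) ht (hyv ▸ hyt).symm
    by_cases htv : t = v
    · exact (htv ▸ hnbr (htv ▸ ht) hy (htv ▸ hyt)).symm
    rw [hc' hu hyv, hc' hu htv]
    exact hproper ⟨hy, hu, hyv⟩ ⟨ht, hu, htv⟩ hyt
  by_cases hv₀₁₂ : u₀ = v ∨ u₁ = v ∨ u₂ = v
  · exact hfront h₀₁ h₁₂ h₂₃ h₃₄ h₀₂ h₁₃ h₂₄ hv₀₁₂ ⟨e₁, e₂⟩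
  by_cases hv₄₃ : u₄ = v ∨ u₃ = v
  · have hsw : ∀ x y, c' s(x, y) = c' s(y, x) := fun x y => congrArg c' Sym2.eq_swap
    exact hfront h₃₄.symm h₂₃.symm h₁₂.symm h₀₁.symm h₂₄.symm h₁₃.symm h₀₂.symm
      (hv₄₃.elim .inl (.inr ∘ .inl))
      ⟨(hsw _ _).trans (e₂.symm.trans (hsw _ _)), (hsw _ _).trans (e₁.symm.trans (hsw _ _))⟩
  simp only [not_or] at hv₀₁₂ hv₄₃
  obtain ⟨⟨hv₀, hv₁, hv₂⟩, hv₄, hv₃⟩ := And.intro hv₀₁₂ hv₄₃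
  rw [hc' hv₀ hv₁, hc' hv₂ hv₃] at e₁
  rw [hc' hv₁ hv₂, hc' hv₃ hv₄] at e₂
  exact hstar ⟨h₀₁, hv₀, hv₁⟩ ⟨h₁₂, hv₁, hv₂⟩ ⟨h₂₃, hv₂, hv₃⟩ ⟨h₃₄, hv₃, hv₄⟩ h₀₂ h₁₃ h₂₄ ⟨e₁, e₂⟩

/-- Recoloring the two edges at `v` by `a` on `vp` and `b` on `vq`. Besides properness at `p`
and `q`, each hypothesis excludes the bicolored walks of one shape: `hqy` the walks `p v q y t`,
`hpy` the walks `q v p y t`, `hmid` the walks `y p v q t`, and `hpyt`, `hqyt` the walks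
`v p y t s`, `v q y t s`. -/
theorem StarEdgeColorable.of_neighborSet_eq_pair (hN : G.neighborSet v = {p, q}) (hpq : p ≠ q)
    {c : Sym2 V → Fin k} (hc : IsStarEdgeColoring (G.deleteVert v) k c) {a b : Fin k}
    (hab : a ≠ b)
    (hpa : ∀ ⦃y⦄, (G.deleteVert v).Adj p y → c s(p, y) ≠ a)
    (hqb : ∀ ⦃y⦄, (G.deleteVert v).Adj q y → c s(q, y) ≠ b)
    (hqy : ∀ ⦃y t⦄, (G.deleteVert v).Adj q y → (G.deleteVert v).Adj y t →
      ¬(c s(q, y) = a ∧ c s(y, t) = b))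
    (hpy : ∀ ⦃y t⦄, (G.deleteVert v).Adj p y → (G.deleteVert v).Adj y t →
      ¬(c s(p, y) = b ∧ c s(y, t) = a))
    (hmid : ∀ ⦃y t⦄, (G.deleteVert v).Adj p y → (G.deleteVert v).Adj q t →
      ¬(c s(p, y) = b ∧ c s(q, t) = a))
    (hpyt : ∀ ⦃y t s⦄, (G.deleteVert v).Adj p y → (G.deleteVert v).Adj y t →
      (G.deleteVert v).Adj t s → t ≠ p → s ≠ y → ¬(c s(y, t) = a ∧ c s(p, y) = c s(t, s)))
    (hqyt : ∀ ⦃y t s⦄, (G.deleteVert v).Adj q y → (G.deleteVert v).Adj y t →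
      (G.deleteVert v).Adj t s → t ≠ q → s ≠ y → ¬(c s(y, t) = b ∧ c s(q, y) = c s(t, s))) :
    StarEdgeColorable G k := by
  classical
  have hNp : ∀ u, G.Adj v u ↔ u = p ∨ u = q := fun u => Set.ext_iff.1 hN u
  have hNq : ∀ u, G.Adj v u ↔ u = q ∨ u = p := fun u => (hNp u).trans or_comm
  have hpv : p ≠ v := (G.ne_of_adj ((hNp p).2 (.inl rfl))).symm
  have hqv : q ≠ v := (G.ne_of_adj ((hNp q).2 (.inr rfl))).symm
  let c' : Sym2 V → Fin k := fun e => if v ∈ e then (if p ∈ e then a else b) else c e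
  have hva : c' s(v, p) = a := by simp [c']
  have hvb : c' s(v, q) = b := by simp [c', hpv, hpq]
  have hc' : ∀ ⦃x y⦄, x ≠ v → y ≠ v → c' s(x, y) = c s(x, y) := by
    intro x y hx hy
    simp [c', hx.symm, hy.symm]
  refine ⟨c', hc.of_deleteVert hc' (fun y t hy ht hyt => ?_) (fun u t hu ht htv => ?_)
    (fun u₀ u₁ u₂ u₃ u₄ h₀₁ h₁₂ h₂₃ h₃₄ h₀₂ h₁₃ h₂₄ hv => ?_)⟩
  · rcases (hNp y).1 hy with rfl | rfl <;> rcases (hNp t).1 ht with rfl | rfl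
    exacts [absurd rfl hyt, hva ▸ hvb ▸ hab, hvb ▸ hva ▸ hab.symm, absurd rfl hyt]
  · have huv : u ≠ v := G.ne_of_adj hu
    rw [Sym2.eq_swap, hc' huv htv]
    obtain rfl | rfl := (hNp u).1 hu.symm
    · exact hva ▸ (hpa ⟨ht, huv, htv⟩).symm
    · exact hvb ▸ (hqb ⟨ht, huv, htv⟩).symm
  have hp := degreeTwoExtension_not_bicolored hNp hva hvb hc' hab hqy hpy hmid hpyt
    h₀₁ h₁₂ h₂₃ h₃₄ h₀₂ h₁₃ h₂₄
  have hq := degreeTwoExtension_not_bicolored hNq hvb hva hc' hab.symm hpy hqy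
    (fun y t hy ht h => hmid ht hy ⟨h.2, h.1⟩) hqyt h₀₁ h₁₂ h₂₃ h₃₄ h₀₂ h₁₃ h₂₄
  rcases hv with rfl | rfl | rfl
  · rcases (hNp u₁).1 h₀₁ with rfl | rfl
    exacts [hp (.inl ⟨rfl, rfl⟩), hq (.inl ⟨rfl, rfl⟩)]
  · rcases (hNp u₀).1 h₀₁.symm with rfl | rfl
    exacts [hp (.inr (.inl ⟨rfl, rfl⟩)), hq (.inr (.inl ⟨rfl, rfl⟩))]
  · rcases (hNp u₁).1 h₁₂.symm with rfl | rfl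
    exacts [hp (.inr (.inr ⟨rfl, rfl⟩)), hq (.inr (.inr ⟨rfl, rfl⟩))]

end StarEdgeColoring

section FourCycle

open Finset

variable {V : Type*} {G : SimpleGraph V} {k : ℕ} {v p q r : V} {c : Sym2 V → Fin k}

theorem StarEdgeColorable.of_fourCycle_of_colors (hv : G.neighborSet v = {p, q})
    (hp : G.neighborSet p = {v, r}) (hpq : p ≠ q) (hc : IsStarEdgeColoring (G.deleteVert v) k c)
    {a b : Fin k} (hbq : ∀ ⦃y⦄, (G.deleteVert v).Adj q y → c s(q, y) ≠ b)
    (hb : ∀ ⦃y t⦄, (G.deleteVert v).Adj q y → (G.deleteVert v).Adj y t → c s(y, t) = b →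
      y = r ∧ t = p)
    (hab : a ≠ b) (hapr : a ≠ c s(p, r)) (har : ∀ ⦃t⦄, G.Adj r t → t ≠ p → c s(r, t) ≠ a)
    (haq : b = c s(p, r) → ∀ ⦃y⦄, (G.deleteVert v).Adj q y → c s(q, y) ≠ a) :
    StarEdgeColorable G k := by
  have hNp : ∀ ⦃y⦄, (G.deleteVert v).Adj p y → y = r := fun y hy =>
    ((Set.ext_iff.1 hp y).1 hy.1).resolve_left hy.2.2
  refine StarEdgeColorable.of_neighborSet_eq_pair hv hpq hc hab
    (fun y hy => hNp hy ▸ hapr.symm) hbq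
    (fun y t hy ht ⟨hqy, hyt⟩ => ?_) (fun y t hy ht ⟨hpy, hyt⟩ => ?_)
    (fun y t hy ht ⟨hpy, hqt⟩ => ?_) (fun y t s hy ht _ htp _ h => ?_)
    (fun y t s hy ht hs _ hsy h => ?_)
  · obtain ⟨rfl, rfl⟩ := hb hy ht hyt
    exact haq (Sym2.eq_swap ▸ hyt).symm hy hqy
  · obtain rfl := hNp hy
    by_cases htp : t = p
    · exact hapr (htp ▸ Sym2.eq_swap ▸ hyt).symm
    · exact har ht.1 htp hyt
  · obtain rfl := hNp hy
    exact haq hpy.symm ht hqt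
  · obtain rfl := hNp hy
    exact har ht.1 htp h.1
  · obtain ⟨rfl, rfl⟩ := hb hy ht h.1
    exact hsy (hNp hs)

variable [Fintype V] [DecidableEq V] [DecidableRel G.Adj]

lemma card_image_neighborFinset_sdiff_le {α : Type*} [DecidableEq α] {u : V} {s : Finset V}
    (hs : s ⊆ G.neighborFinset u) (f : V → α) :
    #((G.neighborFinset u \ s).image f) ≤ G.degree u - #s :=
  card_image_le.trans <| by rw [card_sdiff_of_subset hs, card_neighborFinset_eq_degree]

lemma exists_color_vq (hv : G.neighborSet v = {p, q}) (hp : G.neighborSet p = {v, r})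
    (hrq : G.Adj r q) (hpq : p ≠ q)
    (hcount : G.degree q - 1 + (G.degree r - 2) +
      ∑ y ∈ G.neighborFinset q \ {v, r}, (G.degree y - 1) < k) :
    ∃ b, (∀ ⦃y⦄, (G.deleteVert v).Adj q y → c s(q, y) ≠ b) ∧
      ∀ ⦃y t⦄, (G.deleteVert v).Adj q y → (G.deleteVert v).Adj y t → c s(y, t) = b →
        y = r ∧ t = p := by
  have hvq : G.Adj v q := (Set.ext_iff.1 hv q).2 (.inr rfl)
  have hpr : G.Adj p r := (Set.ext_iff.1 hp r).2 (.inr rfl)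
  set S := (G.neighborFinset q \ {v}).image (fun y => c s(q, y))
  set W := (G.neighborFinset r \ {p, q}).image (fun t => c s(r, t))
  set Θ := (G.neighborFinset q \ {v, r}).biUnion
    (fun y => (G.neighborFinset y \ {q}).image (fun t => c s(y, t)))
  have hS : #S ≤ G.degree q - 1 :=
    card_image_neighborFinset_sdiff_le (by simpa using hvq.symm) _
  have hW : #W ≤ G.degree r - 2 := card_pair hpq ▸
    card_image_neighborFinset_sdiff_le (by simp [insert_subset_iff, hpr.symm, hrq]) _
  have hΘ : #Θ ≤ ∑ y ∈ G.neighborFinset q \ {v, r}, (G.degree y - 1) :=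
    card_biUnion_le.trans <| sum_le_sum fun y hy =>
      card_image_neighborFinset_sdiff_le (by simp_all [adj_comm]) _
  obtain ⟨b, -, hb⟩ := exists_mem_notMem_of_card_lt_card (s := S ∪ W ∪ Θ) (t := univ) <| by
    have := card_union_le (S ∪ W) Θ
    have := card_union_le S W
    simp only [card_univ, Fintype.card_fin]
    omega
  simp only [mem_union, not_or] at hb
  obtain ⟨⟨hbS, hbW⟩, hbΘ⟩ := hb
  have hbq : ∀ ⦃y⦄, (G.deleteVert v).Adj q y → c s(q, y) ≠ b := fun y hy h =>
    hbS (h ▸ mem_image_of_mem _ (by simp [hy.1, hy.2.2]))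
  refine ⟨b, hbq, fun y t hy ht hyt => ?_⟩
  by_cases htq : t = q
  · exact (hbq (htq ▸ ht.symm) ((congrArg c Sym2.eq_swap).trans (htq ▸ hyt))).elim
  by_cases hyr : y = r
  · subst hyr
    refine ⟨rfl, by_contra fun htp => hbW (hyt ▸ mem_image_of_mem _ ?_)⟩
    simp [ht.1, htp, htq]
  · refine (hbΘ (hyt ▸ mem_biUnion.2 ⟨y, ?_, mem_image_of_mem _ ?_⟩)).elim
    · simp [hy.1, hy.2.2, hyr]
    · simp [ht.1, htq]

lemma exists_color_vp (hv : G.neighborSet v = {p, q}) (hp : G.neighborSet p = {v, r})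
    (hrq : G.Adj r q) (hpq : p ≠ q) (hrv : r ≠ v) (hq3 : G.degree q ≤ 3)
    (hr3 : G.degree r ≤ 3) (hk : 5 ≤ k) (b : Fin k) :
    ∃ a, a ≠ b ∧ a ≠ c s(p, r) ∧ (∀ ⦃t⦄, G.Adj r t → t ≠ p → c s(r, t) ≠ a) ∧
      (b = c s(p, r) → ∀ ⦃y⦄, (G.deleteVert v).Adj q y → c s(q, y) ≠ a) := by
  have hvq : G.Adj v q := (Set.ext_iff.1 hv q).2 (.inr rfl)
  have hpr : G.Adj p r := (Set.ext_iff.1 hp r).2 (.inr rfl)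
  set S := (G.neighborFinset q \ {v}).image (fun y => c s(q, y))
  set W := (G.neighborFinset r \ {p, q}).image (fun t => c s(r, t))
  have hS : #S ≤ G.degree q - 1 :=
    card_image_neighborFinset_sdiff_le (by simpa using hvq.symm) _
  have hW : #W ≤ G.degree r - 2 := card_pair hpq ▸
    card_image_neighborFinset_sdiff_le (by simp [insert_subset_iff, hpr.symm, hrq]) _
  have memW : ∀ ⦃t⦄, G.Adj r t → t ≠ p → t ≠ q → c s(r, t) ∈ W := fun t ht htp htq =>
    mem_image_of_mem _ (by simp [ht, htp, htq])
  by_cases hbB : b = c s(p, r)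
  · -- the color `c s(r, q)` is among the colors at `q`, so it is avoided for free
    obtain ⟨a, -, ha⟩ := exists_mem_notMem_of_card_lt_card (s := insert b (S ∪ W)) (t := univ) <| by
      have := card_insert_le b (S ∪ W)
      have := card_union_le S W
      simp only [card_univ, Fintype.card_fin]
      omega
    simp only [mem_insert, mem_union, not_or] at ha
    have haq : ∀ ⦃y⦄, (G.deleteVert v).Adj q y → c s(q, y) ≠ a := fun y hy h =>
      ha.2.1 (h ▸ mem_image_of_mem _ (by simp [hy.1, hy.2.2]))
    refine ⟨a, ha.1, hbB ▸ ha.1, fun t ht htp h => ?_, fun _ => haq⟩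
    by_cases htq : t = q
    · exact haq ⟨hrq.symm, (G.ne_of_adj hvq).symm, hrv⟩ ((congrArg c Sym2.eq_swap).trans (htq ▸ h))
    · exact ha.2.2 (h ▸ memW ht htp htq)
  · obtain ⟨a, -, ha⟩ := exists_mem_notMem_of_card_lt_card
      (s := {b, c s(p, r), c s(r, q)} ∪ W) (t := univ) <| by
      have := card_union_le {b, c s(p, r), c s(r, q)} W
      have := card_le_three (a := b) (b := c s(p, r)) (c := c s(r, q))
      simp only [card_univ, Fintype.card_fin]
      omega
    simp only [mem_union, mem_insert, mem_singleton, not_or] at ha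
    refine ⟨a, ha.1.1, ha.1.2.1, fun t ht htp h => ?_, fun h => (hbB h).elim⟩
    by_cases htq : t = q
    · exact ha.1.2.2 (htq ▸ h).symm
    · exact ha.2 (h ▸ memW ht htp htq)

theorem StarEdgeColorable.of_deleteVert_of_fourCycle
    (hv : G.neighborSet v = {p, q}) (hp : G.neighborSet p = {v, r}) (hrq : G.Adj r q)
    (hpq : p ≠ q) (hrv : r ≠ v) (hq3 : G.degree q ≤ 3) (hr3 : G.degree r ≤ 3) (hk : 5 ≤ k)
    (hcount : G.degree q - 1 + (G.degree r - 2) +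
      ∑ y ∈ G.neighborFinset q \ {v, r}, (G.degree y - 1) < k)
    (hdel : StarEdgeColorable (G.deleteVert v) k) :
    StarEdgeColorable G k := by
  obtain ⟨c, hc⟩ := hdel
  obtain ⟨b, hbq, hb⟩ := exists_color_vq (c := c) hv hp hrq hpq hcount
  obtain ⟨a, hab, hapr, har, haq⟩ := exists_color_vp (c := c) hv hp hrq hpq hrv hq3 hr3 hk b
  exact .of_fourCycle_of_colors hv hp hpq hc hbq hb hab hapr har haq

end FourCycle

namespace SimpleGraph

open Finset

variable {V : Type*} [Fintype V] {G : SimpleGraph V} [DecidableRel G.Adj]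

lemma sum_degree_sub_one_le (hsub : ∀ v, G.degree v ≤ 3) (s : Finset V) :
    ∑ y ∈ s, (G.degree y - 1) ≤ 2 * #s := by
  calc ∑ y ∈ s, (G.degree y - 1) ≤ #s • 2 :=
        sum_le_card_nsmul s _ 2 fun y _ => by have := hsub y; omega
    _ = 2 * #s := by rw [smul_eq_mul, mul_comm]

variable [DecidableEq V]

lemma sum_degree_sub_one_lt (hsub : ∀ v, G.degree v ≤ 3) {s : Finset V} {u : V}
    (hu : u ∈ s) (hdu : G.degree u < 3) : ∑ y ∈ s, (G.degree y - 1) < 2 * #s := by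
  have := sum_degree_sub_one_le hsub (s.erase u)
  rw [← add_sum_erase s _ hu]
  rw [card_erase_of_mem hu] at this
  have := card_pos.2 ⟨u, hu⟩
  omega

lemma card_neighborFinset_sdiff_pair {u x y : V} (hx : G.Adj u x) (hy : G.Adj u y) (hxy : x ≠ y) :
    #(G.neighborFinset u \ {x, y}) = G.degree u - 2 := by
  rw [card_sdiff_of_subset (by simp [insert_subset_iff, hx, hy]), card_pair hxy,
    card_neighborFinset_eq_degree]

end SimpleGraph

theorem StarCritical.degree_eq_three_of_fourCycle {V : Type*} [Fintype V] [DecidableEq V]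
    {G : SimpleGraph V} [DecidableRel G.Adj] {k : ℕ} (hcrit : StarCritical G k)
    (hsub : ∀ v, G.degree v ≤ 3) (hk : 5 ≤ k) {v p q r : V}
    (hv : G.neighborSet v = {p, q}) (hp : G.neighborSet p = {v, r}) (hrq : G.Adj r q)
    (hpq : p ≠ q) (hrv : r ≠ v) :
    k = 5 ∧ G.degree q = 3 ∧ G.degree r = 3 ∧
      ∀ y ∈ G.neighborFinset q \ {v, r}, G.degree y = 3 := by
  have hcount : k ≤ G.degree q - 1 + (G.degree r - 2) +
      ∑ y ∈ G.neighborFinset q \ {v, r}, (G.degree y - 1) :=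
    not_lt.1 fun h => hcrit.1 <| .of_deleteVert_of_fourCycle hv hp hrq hpq hrv
      (hsub q) (hsub r) hk h (hcrit.2 v)
  have hcard := card_neighborFinset_sdiff_pair ((Set.ext_iff.1 hv q).2 (.inr rfl)).symm
    hrq.symm hrv.symm
  have := sum_degree_sub_one_le hsub (G.neighborFinset q \ {v, r})
  have := hsub q
  have := hsub r
  obtain ⟨rfl, hq, hr⟩ : k = 5 ∧ G.degree q = 3 ∧ G.degree r = 3 := by omega
  refine ⟨rfl, hq, hr, fun y hy => ?_⟩
  by_contra hdy
  have := sum_degree_sub_one_lt hsub hy (by have := hsub y; omega)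
  omega

theorem lemma2c_general {V : Type*} [Fintype V] [DecidableEq V] (G : SimpleGraph V)
    [DecidableRel G.Adj] (hsub : ∀ v : V, G.degree v ≤ 3)
    (k : ℕ) (hk : k = 5 ∨ k = 6) (hcrit : StarCritical G k)
    (x z w : V) (hzw : z ≠ w)
    (hNx : G.neighborSet x = {z, w}) (zs : V) (hzsx : zs ≠ x)
    (hNz : G.neighborSet z = {x, zs})
    (hadj : G.Adj zs w) :
    k = 5 ∧ G.degree zs = 3 ∧ G.degree w = 3 ∧
      ∀ u ∈ (insert w (G.neighborSet w) ∪ insert zs (G.neighborSet zs)) \ {x, z},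
        G.degree u = 3 := by
  have hk5 : 5 ≤ k := by omega
  obtain ⟨rfl, hzs, hw, hNzs⟩ :=
    hcrit.degree_eq_three_of_fourCycle hsub hk5 hNz hNx hadj.symm hzsx.symm hzw.symm
  obtain ⟨-, -, -, hNw⟩ := hcrit.degree_eq_three_of_fourCycle hsub hk5 hNx hNz hadj hzw hzsx
  refine ⟨rfl, hzs, hw, fun u hu => ?_⟩
  simp only [Set.mem_sdiff, Set.mem_union, Set.mem_insert_iff, mem_neighborSet,
    Set.mem_singleton_iff, not_or] at hu
  obtain ⟨(hu | hu) | (hu | hu), hux, huz⟩ := hu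
  · exact hu ▸ hw
  · by_cases huzs : u = zs
    · exact huzs ▸ hzs
    · exact hNw u (by simp [hu, hux, huzs])
  · exact hu ▸ hzs
  · by_cases huw : u = w
    · exact huw ▸ hw
    · exact hNzs u (by simp [hu, huz, huw])

/-- Lemma 2(c): if `d(z) = 2`, `z*` is the neighbor of `z` other than `x`, and
`z* w ∈ E(G)`, then `k = 5`, `d(z*) = d(w) = 3`, and every vertex of
`(N_G[w] ∪ N_G[z*]) \ {x, z}` has degree 3. -/
theorem lemma2c {V : Type*} [Fintype V] [DecidableEq V] (G : SimpleGraph V)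
    [DecidableRel G.Adj] (hsub : ∀ v : V, G.degree v ≤ 3)
    (k : ℕ) (hk : k = 5 ∨ k = 6) (hcrit : StarCritical G k)
    (x z w : V) (hx : G.degree x = 2) (hzw : z ≠ w)
    (hNx : G.neighborSet x = {z, w}) (hd : G.degree z ≤ G.degree w)
    (hz : G.degree z = 2) (zs : V) (hzsx : zs ≠ x)
    (hNz : G.neighborSet z = {x, zs})
    (hadj : G.Adj zs w) :
    k = 5 ∧ G.degree zs = 3 ∧ G.degree w = 3 ∧
      ∀ u ∈ (insert w (G.neighborSet w) ∪ insert zs (G.neighborSet zs)) \ {x, z},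
        G.degree u = 3 :=
  lemma2c_general G hsub k hk hcrit x z w hzw hNx zs hzsx hNz hadj
end

section
/- Let G be a star 6-critical subcubic simple graph, and let x be a vertex of degree 2 with N_G(x) = {z, w}, where d_G(z) ≤ d_G(w). Suppose d_G(z) = 2 and write N_G(z) = {x, z*}. Then z* and w are nonadjacent in G, d_G(z*) = d_G(w) = 3, and for every vertex v ∈ (N_G(w) ∪ N_G(z*)) \ {x, z}: d_G(v) = 3 and every vertex u ∈ N_G(v) has degree at least 2 in G. -/
open SimpleGraph

/-! By criticality `G - z` has a star 6-edge-coloring `c`; each claim is proved by extending `c`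
to `G`, contradicting `χ'_s(G) > 6`. Coloring `zx` with `α` and `z z*` with `β` (`z*` is `zs`)
yields a star coloring as soon as `α` avoids the colors at `w`, `β` avoids the colors at `z*` and
on the edges `bd` with `b ∈ N(z*) \ {z}`, `d ∉ {z*, x, z}`, and a few further conditions hold
that cost `α` at most two more colors. In a subcubic graph `β` then has at most `2 + 2·2 = 6`
forbidden colors, and each configuration to be excluded saves one: `d(z*) ≤ 2`, `z* ~ w`, a
neighbor of `z*` of degree at most two, or a leaf `u` next to a neighbor `v` of `z*`, where
`β = c(vu)` is harmless. The claims about `w` follow from the symmetry `z* z x w ↔ w x z z*`. -/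

section

variable {V : Type*} {k : ℕ}

structure IsBicoloredTrail (G : SimpleGraph V) (c : Sym2 V → Fin k) (v₀ v₁ v₂ v₃ v₄ : V) :
    Prop where
  adj₀₁ : G.Adj v₀ v₁
  adj₁₂ : G.Adj v₁ v₂
  adj₂₃ : G.Adj v₂ v₃
  adj₃₄ : G.Adj v₃ v₄
  distinct : ([s(v₀, v₁), s(v₁, v₂), s(v₂, v₃), s(v₃, v₄)] : List (Sym2 V)).Pairwise (· ≠ ·)
  color₀₂ : c s(v₀, v₁) = c s(v₂, v₃)
  color₁₃ : c s(v₁, v₂) = c s(v₃, v₄)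

theorem isStarEdgeColoring_iff_s14 {G : SimpleGraph V} {c : Sym2 V → Fin k} :
    IsStarEdgeColoring G k c ↔
      (∀ v b₁ b₂, G.Adj v b₁ → G.Adj v b₂ → b₁ ≠ b₂ → c s(v, b₁) ≠ c s(v, b₂)) ∧
      ∀ v₀ v₁ v₂ v₃ v₄, ¬ IsBicoloredTrail G c v₀ v₁ v₂ v₃ v₄ := by
  refine and_congr ⟨fun h v b₁ b₂ h₁ h₂ hb => ?_, fun h e₁ he₁ e₂ he₂ hne ⟨v, hv₁, hv₂⟩ => ?_⟩ ?_
  · refine h _ h₁ _ h₂ (fun he => hb ?_) ⟨v, Sym2.mem_mk_left _ _, Sym2.mem_mk_left _ _⟩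
    exact Sym2.congr_right.1 he
  · obtain ⟨b₁, rfl⟩ := Sym2.mem_iff_exists.1 hv₁
    obtain ⟨b₂, rfl⟩ := Sym2.mem_iff_exists.1 hv₂
    exact h v b₁ b₂ he₁ he₂ (by rintro rfl; exact hne rfl)
  · exact ⟨fun h v₀ v₁ v₂ v₃ v₄ t => h v₀ v₁ v₂ v₃ v₄ t.adj₀₁ t.adj₁₂ t.adj₂₃ t.adj₃₄
        t.distinct ⟨t.color₀₂, t.color₁₃⟩,
      fun h v₀ v₁ v₂ v₃ v₄ h₀₁ h₁₂ h₂₃ h₃₄ hd hc => h v₀ v₁ v₂ v₃ v₄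
        ⟨h₀₁, h₁₂, h₂₃, h₃₄, hd, hc.1, hc.2⟩⟩

namespace IsBicoloredTrail

variable {G : SimpleGraph V} {c : Sym2 V → Fin k} {v₀ v₁ v₂ v₃ v₄ : V}

theorem reverse (t : IsBicoloredTrail G c v₀ v₁ v₂ v₃ v₄) :
    IsBicoloredTrail G c v₄ v₃ v₂ v₁ v₀ where
  adj₀₁ := t.adj₃₄.symm
  adj₁₂ := t.adj₂₃.symm
  adj₂₃ := t.adj₁₂.symm
  adj₃₄ := t.adj₀₁.symm
  distinct := by
    rw [Sym2.eq_swap (a := v₄) (b := v₃), Sym2.eq_swap (a := v₃) (b := v₂),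
      Sym2.eq_swap (a := v₂) (b := v₁), Sym2.eq_swap (a := v₁) (b := v₀)]
    exact List.pairwise_reverse.2 (t.distinct.imp Ne.symm)
  color₀₂ := by simpa only [Sym2.eq_swap] using t.color₁₃.symm
  color₁₃ := by simpa only [Sym2.eq_swap] using t.color₀₂.symm

theorem edge_ne₀₃ (t : IsBicoloredTrail G c v₀ v₁ v₂ v₃ v₄) : s(v₀, v₁) ≠ s(v₃, v₄) := by
  have h := t.distinct
  simp only [List.pairwise_cons, List.mem_cons, List.not_mem_nil, or_false,
    forall_eq_or_imp, forall_eq] at h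
  exact h.1.2.2

theorem ne₀₂ (t : IsBicoloredTrail G c v₀ v₁ v₂ v₃ v₄) : v₀ ≠ v₂ := by
  rintro rfl
  exact (List.pairwise_cons.1 t.distinct).1 _ (by simp) Sym2.eq_swap

theorem ne₁₃ (t : IsBicoloredTrail G c v₀ v₁ v₂ v₃ v₄) : v₁ ≠ v₃ := by
  rintro rfl
  exact (List.pairwise_cons.1 (List.pairwise_cons.1 t.distinct).2).1 _ (by simp) Sym2.eq_swap

theorem ne₂₄ (t : IsBicoloredTrail G c v₀ v₁ v₂ v₃ v₄) : v₂ ≠ v₄ :=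
  t.reverse.ne₀₂.symm

end IsBicoloredTrail

namespace IsStarEdgeColoring

variable {G : SimpleGraph V} {c : Sym2 V → Fin k}

theorem proper (hc : IsStarEdgeColoring G k c) {v b₁ b₂ : V} (h₁ : G.Adj v b₁)
    (h₂ : G.Adj v b₂) (hb : b₁ ≠ b₂) : c s(v, b₁) ≠ c s(v, b₂) :=
  (isStarEdgeColoring_iff_s14.1 hc).1 v b₁ b₂ h₁ h₂ hb

theorem not_trail (hc : IsStarEdgeColoring G k c) {v₀ v₁ v₂ v₃ v₄ : V} :
    ¬ IsBicoloredTrail G c v₀ v₁ v₂ v₃ v₄ :=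
  (isStarEdgeColoring_iff_s14.1 hc).2 v₀ v₁ v₂ v₃ v₄

end IsStarEdgeColoring

structure SimpleGraph.IsThread (G : SimpleGraph V) (zs z x w : V) : Prop where
  neighborSet_z : G.neighborSet z = {x, zs}
  neighborSet_x : G.neighborSet x = {z, w}
  ne_zs_x : zs ≠ x
  ne_z_w : z ≠ w

namespace SimpleGraph.IsThread

variable {G : SimpleGraph V} {zs z x w : V}

theorem symm (P : G.IsThread zs z x w) : G.IsThread w x z zs :=
  ⟨P.neighborSet_x, P.neighborSet_z, P.ne_z_w.symm, P.ne_zs_x.symm⟩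

theorem adj_z_iff (P : G.IsThread zs z x w) {t : V} : G.Adj z t ↔ t = x ∨ t = zs := by
  rw [← mem_neighborSet, P.neighborSet_z, Set.mem_insert_iff, Set.mem_singleton_iff]

theorem adj_x_iff (P : G.IsThread zs z x w) {t : V} : G.Adj x t ↔ t = z ∨ t = w :=
  P.symm.adj_z_iff

theorem adj_z_x (P : G.IsThread zs z x w) : G.Adj z x := P.adj_z_iff.2 (.inl rfl)

theorem adj_z_zs (P : G.IsThread zs z x w) : G.Adj z zs := P.adj_z_iff.2 (.inr rfl)

theorem adj_x_w (P : G.IsThread zs z x w) : G.Adj x w := P.symm.adj_z_zs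

theorem ne_x_z (P : G.IsThread zs z x w) : x ≠ z := P.adj_z_x.ne.symm

theorem ne_zs_z (P : G.IsThread zs z x w) : zs ≠ z := P.adj_z_zs.ne.symm

end SimpleGraph.IsThread

section Extension

variable [DecidableEq V]

def extendAt (c : Sym2 V → Fin k) (z x : V) (α β : Fin k) : Sym2 V → Fin k :=
  fun e => if z ∈ e then if x ∈ e then α else β else c e

variable {c : Sym2 V → Fin k} {z x : V} {α β : Fin k}

theorem extendAt_of_ne {a b : V} (ha : a ≠ z) (hb : b ≠ z) :
    extendAt c z x α β s(a, b) = c s(a, b) := by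
  simp [extendAt, ha.symm, hb.symm]

theorem extendAt_z_x : extendAt c z x α β s(z, x) = α := by
  simp [extendAt]

theorem extendAt_x_z : extendAt c z x α β s(x, z) = α := by
  simp [extendAt]

theorem extendAt_z_ne_x {t : V} (hxz : x ≠ z) (hxt : x ≠ t) :
    extendAt c z x α β s(z, t) = β := by
  simp [extendAt, hxz, hxt]

theorem extendAt_ne_x_z {t : V} (hxz : x ≠ z) (hxt : x ≠ t) :
    extendAt c z x α β s(t, z) = β := by
  simp [extendAt, hxz, hxt]

end Extension

/-- The fields `trail_from_*` rule out the bicolored trails through the new edges `zx` (colored `α`)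
and `z zs` (colored `β`) that start at `z`, `x` and `w` respectively. -/
structure AdmissibleColors (G : SimpleGraph V) (c : Sym2 V → Fin k) (zs z x w : V)
    (α β : Fin k) : Prop where
  ne : α ≠ β
  alpha_ne_at_w : ∀ y, G.Adj w y → y ≠ z → α ≠ c s(w, y)
  beta_ne_at_zs : ∀ b, G.Adj zs b → b ≠ z → β ≠ c s(zs, b)
  trail_from_z : ∀ b d e, G.Adj zs b → G.Adj b d → G.Adj d e → b ≠ z → d ≠ x → d ≠ z →
    d ≠ zs → e ≠ z → e ≠ b → β = c s(b, d) → c s(zs, b) ≠ c s(d, e)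
  trail_from_x : ∀ d e, G.Adj zs d → G.Adj d e → d ≠ z → e ≠ z → e ≠ zs → e ≠ x →
    α = c s(zs, d) → β ≠ c s(d, e)
  trail_from_w : β = c s(x, w) → ∀ b, G.Adj zs b → b ≠ z → α ≠ c s(zs, b)

namespace AdmissibleColors

variable [DecidableEq V] {G : SimpleGraph V} {c : Sym2 V → Fin k} {zs z x w : V}
  {α β : Fin k} {v₀ v₁ v₂ v₃ v₄ : V}

theorem not_trail_z_first (h : AdmissibleColors G c zs z x w α β) (P : G.IsThread zs z x w)
    (h₁ : v₁ ≠ z) (h₂ : v₂ ≠ z) (h₃ : v₃ ≠ z)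
    (t : IsBicoloredTrail G (extendAt c z x α β) z v₁ v₂ v₃ v₄) : False := by
  have hc₁ := t.color₀₂
  have hc₂ := t.color₁₃
  rw [extendAt_of_ne h₂ h₃] at hc₁
  rcases P.adj_z_iff.1 t.adj₀₁ with h | h <;> subst v₁
  · obtain rfl : v₂ = w := (P.adj_x_iff.1 t.adj₁₂).resolve_left h₂
    rw [extendAt_z_x] at hc₁
    exact h.alpha_ne_at_w v₃ t.adj₂₃ h₃ hc₁
  · rw [extendAt_z_ne_x P.ne_x_z P.ne_zs_x.symm] at hc₁
    rw [extendAt_of_ne h₁ h₂] at hc₂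
    obtain rfl | h₄ := eq_or_ne v₄ z
    · rcases P.adj_z_iff.1 t.adj₃₄.symm with h | h <;> subst v₃
      · obtain rfl : v₂ = w := (P.adj_x_iff.1 t.adj₂₃.symm).resolve_left h₂
        rw [extendAt_x_z] at hc₂
        exact h.trail_from_w (hc₁.trans (congrArg c Sym2.eq_swap)) v₂ t.adj₁₂ h₂ hc₂.symm
      · exact t.edge_ne₀₃ Sym2.eq_swap
    rw [extendAt_of_ne h₃ h₄] at hc₂
    have h₃x : v₃ ≠ x := by
      rintro rfl
      obtain rfl : v₂ = w := (P.adj_x_iff.1 t.adj₂₃.symm).resolve_left h₂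
      exact t.ne₂₄ ((P.adj_x_iff.1 t.adj₃₄).resolve_left h₄).symm
    exact h.trail_from_z v₂ v₃ v₄ t.adj₁₂ t.adj₂₃ t.adj₃₄ h₂ h₃x h₃ t.ne₁₃.symm h₄
      t.ne₂₄.symm hc₁ hc₂

theorem not_trail_z_second (h : AdmissibleColors G c zs z x w α β) (P : G.IsThread zs z x w)
    (t : IsBicoloredTrail G (extendAt c z x α β) v₀ z v₂ v₃ v₄) : False := by
  have hc₁ := t.color₀₂
  have hc₂ := t.color₁₃
  have h₃ : v₃ ≠ z := t.ne₁₃.symm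
  rcases P.adj_z_iff.1 t.adj₀₁.symm with h₀ | h₀ <;>
    rcases P.adj_z_iff.1 t.adj₁₂ with h₂ | h₂ <;> subst v₀ v₂
  · exact t.ne₀₂ rfl
  · rw [extendAt_x_z, extendAt_of_ne P.ne_zs_z h₃] at hc₁
    rw [extendAt_z_ne_x P.ne_x_z P.ne_zs_x.symm] at hc₂
    obtain h₄ | h₄ := eq_or_ne v₄ z
    · subst v₄
      rcases P.adj_z_iff.1 t.adj₃₄.symm with h | h <;> subst v₃
      · exact t.edge_ne₀₃ rfl
      · exact t.adj₂₃.ne rfl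
    obtain h₄x | h₄x := eq_or_ne v₄ x
    · subst v₄
      have h₃w : v₃ = w := (P.adj_x_iff.1 t.adj₃₄.symm).resolve_left h₃
      subst v₃
      rw [extendAt_of_ne h₃ P.ne_x_z] at hc₂
      exact h.trail_from_w (hc₂.trans (congrArg c Sym2.eq_swap)) w t.adj₂₃ h₃ hc₁
    rw [extendAt_of_ne h₃ h₄] at hc₂
    exact h.trail_from_x v₃ v₄ t.adj₂₃ t.adj₃₄ h₃ h₄ t.ne₂₄.symm h₄x hc₁ hc₂
  · have h₃w : v₃ = w := (P.adj_x_iff.1 t.adj₂₃).resolve_left h₃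
    subst v₃
    have h₄ : v₄ ≠ z := by
      intro h₄
      subst v₄
      rcases P.adj_z_iff.1 t.adj₃₄.symm with h | h <;> subst w
      · exact t.adj₂₃.ne rfl
      · exact t.edge_ne₀₃ rfl
    rw [extendAt_z_x, extendAt_of_ne h₃ h₄] at hc₂
    exact h.alpha_ne_at_w v₄ t.adj₃₄ h₄ hc₂
  · exact t.ne₀₂ rfl

theorem not_trail_z_middle (h : AdmissibleColors G c zs z x w α β) (P : G.IsThread zs z x w)
    (t : IsBicoloredTrail G (extendAt c z x α β) v₀ v₁ z v₃ v₄) : False := by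
  have hc₁ := t.color₀₂
  have hc₂ := t.color₁₃
  have h₀ : v₀ ≠ z := t.ne₀₂
  have h₄ : v₄ ≠ z := t.ne₂₄.symm
  rcases P.adj_z_iff.1 t.adj₁₂.symm with h₁ | h₁ <;>
    rcases P.adj_z_iff.1 t.adj₂₃ with h₃ | h₃ <;> subst v₁ v₃
  · exact t.ne₁₃ rfl
  · have h₀w : v₀ = w := (P.adj_x_iff.1 t.adj₀₁.symm).resolve_left h₀
    subst v₀
    rw [extendAt_of_ne h₀ P.ne_x_z, extendAt_z_ne_x P.ne_x_z P.ne_zs_x.symm] at hc₁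
    rw [extendAt_x_z, extendAt_of_ne P.ne_zs_z h₄] at hc₂
    exact h.trail_from_w (hc₁.symm.trans (congrArg c Sym2.eq_swap)) v₄ t.adj₃₄ h₄ hc₂
  · have h₄w : v₄ = w := (P.adj_x_iff.1 t.adj₃₄).resolve_left h₄
    subst v₄
    rw [extendAt_of_ne h₀ P.ne_zs_z, extendAt_z_x] at hc₁
    rw [extendAt_ne_x_z P.ne_x_z P.ne_zs_x.symm, extendAt_of_ne P.ne_x_z h₄] at hc₂
    exact h.trail_from_w hc₂ v₀ t.adj₀₁.symm h₀ (hc₁.symm.trans (congrArg c Sym2.eq_swap))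
  · exact t.ne₁₃ rfl

theorem proper (h : AdmissibleColors G c zs z x w α β) (P : G.IsThread zs z x w)
    (hc : IsStarEdgeColoring (G.deleteVert z) k c) {v b₁ b₂ : V} (h₁ : G.Adj v b₁)
    (h₂ : G.Adj v b₂) (hb : b₁ ≠ b₂) :
    extendAt c z x α β s(v, b₁) ≠ extendAt c z x α β s(v, b₂) := by
  obtain hv | hv := eq_or_ne v z
  · subst v
    have hzzs : extendAt c z x α β s(z, zs) = β := extendAt_z_ne_x P.ne_x_z P.ne_zs_x.symm
    rcases P.adj_z_iff.1 h₁ with h₁ | h₁ <;> rcases P.adj_z_iff.1 h₂ with h₂ | h₂ <;> subst b₁ b₂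
    · exact absurd rfl hb
    · rw [extendAt_z_x, hzzs]; exact h.ne
    · rw [extendAt_z_x, hzzs]; exact h.ne.symm
    · exact absurd rfl hb
  have at_z : ∀ {b}, G.Adj v z → G.Adj v b → b ≠ z →
      extendAt c z x α β s(v, z) ≠ extendAt c z x α β s(v, b) := by
    intro b hz hb hbz
    rw [extendAt_of_ne hv hbz]
    rcases P.adj_z_iff.1 hz.symm with hvx | hvzs <;> subst v
    · have hbw : b = w := (P.adj_x_iff.1 hb).resolve_left hbz
      subst b
      rw [extendAt_x_z, ← congrArg c Sym2.eq_swap]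
      exact h.alpha_ne_at_w x P.adj_x_w.symm P.ne_x_z
    · rw [extendAt_ne_x_z P.ne_x_z P.ne_zs_x.symm]
      exact h.beta_ne_at_zs b hb hbz
  rcases eq_or_ne b₁ z with hb₁ | hb₁
  · subst b₁; exact at_z h₁ h₂ hb.symm
  rcases eq_or_ne b₂ z with hb₂ | hb₂
  · subst b₂; exact (at_z h₂ h₁ hb).symm
  rw [extendAt_of_ne hv hb₁, extendAt_of_ne hv hb₂]
  exact hc.proper ⟨h₁, hv, hb₁⟩ ⟨h₂, hv, hb₂⟩ hb

theorem isStarEdgeColoring (h : AdmissibleColors G c zs z x w α β) (P : G.IsThread zs z x w)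
    (hc : IsStarEdgeColoring (G.deleteVert z) k c) :
    IsStarEdgeColoring G k (extendAt c z x α β) := by
  refine isStarEdgeColoring_iff_s14.2 ⟨fun _ _ _ => h.proper P hc, fun v₀ v₁ v₂ v₃ v₄ t => ?_⟩
  -- A trail through `z` has `z` among its first three vertices, or its reverse does.
  rcases eq_or_ne v₁ z with h₁ | h₁
  · subst v₁; exact h.not_trail_z_second P t
  rcases eq_or_ne v₂ z with h₂ | h₂
  · subst v₂; exact h.not_trail_z_middle P t
  rcases eq_or_ne v₃ z with h₃ | h₃
  · subst v₃; exact h.not_trail_z_second P t.reverse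
  rcases eq_or_ne v₀ z with h₀ | h₀
  · subst v₀; exact h.not_trail_z_first P h₁ h₂ h₃ t
  rcases eq_or_ne v₄ z with h₄ | h₄
  · subst v₄; exact h.not_trail_z_first P h₃ h₂ h₁ t.reverse
  refine hc.not_trail ⟨⟨t.adj₀₁, h₀, h₁⟩, ⟨t.adj₁₂, h₁, h₂⟩, ⟨t.adj₂₃, h₂, h₃⟩,
    ⟨t.adj₃₄, h₃, h₄⟩, t.distinct, ?_, ?_⟩
  · simpa only [extendAt_of_ne h₀ h₁, extendAt_of_ne h₂ h₃] using t.color₀₂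
  · simpa only [extendAt_of_ne h₁ h₂, extendAt_of_ne h₃ h₄] using t.color₁₃

end AdmissibleColors

open Finset

theorem exists_notMem_of_card_lt {T : Finset (Fin k)} (h : #T < k) : ∃ a, a ∉ T := by
  obtain ⟨a, -, ha⟩ := exists_mem_notMem_of_card_lt_card (s := T) (t := univ)
    (by rwa [card_univ, Fintype.card_fin])
  exact ⟨a, ha⟩

namespace SimpleGraph

variable [Fintype V] [DecidableEq V] {G : SimpleGraph V} [DecidableRel G.Adj]
  {c : Sym2 V → Fin k}

def colorsOutside (G : SimpleGraph V) [DecidableRel G.Adj] (c : Sym2 V → Fin k) (u : V)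
    (X : Finset V) : Finset (Fin k) :=
  (G.neighborFinset u \ X).image fun y => c s(u, y)

theorem mem_colorsOutside {u y : V} {X : Finset V} (h : G.Adj u y) (hy : y ∉ X) :
    c s(u, y) ∈ G.colorsOutside c u X :=
  mem_image_of_mem _ (mem_sdiff.2 ⟨(mem_neighborFinset _ _ _).2 h, hy⟩)

theorem card_colorsOutside_le {u : V} {X Y : Finset V} (hYX : Y ⊆ X)
    (hY : Y ⊆ G.neighborFinset u) : #(G.colorsOutside c u X) ≤ G.degree u - #Y := by
  rw [← card_neighborFinset_eq_degree, ← card_sdiff_of_subset hY]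
  exact card_image_le.trans (card_le_card (sdiff_subset_sdiff subset_rfl hYX))

def colorsBeyond (G : SimpleGraph V) [DecidableRel G.Adj] (c : Sym2 V → Fin k) (zs x z : V)
    (S : Finset V) : Finset (Fin k) :=
  S.biUnion fun b => G.colorsOutside c b {zs, x, z}

variable {zs x z : V}

theorem mem_colorsBeyond {S : Finset V} {b d : V} (hb : b ∈ S) (hbd : G.Adj b d)
    (hd : d ∉ ({zs, x, z} : Finset V)) : c s(b, d) ∈ G.colorsBeyond c zs x z S :=
  mem_biUnion.2 ⟨b, hb, mem_colorsOutside hbd hd⟩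

theorem colorsBeyond_mono {S T : Finset V} (h : S ⊆ T) :
    G.colorsBeyond c zs x z S ⊆ G.colorsBeyond c zs x z T :=
  biUnion_subset_biUnion_of_subset_left _ h

theorem colorsBeyond_subset_union (S : Finset V) (v : V) :
    G.colorsBeyond c zs x z S ⊆
      G.colorsOutside c v {zs, x, z} ∪ G.colorsBeyond c zs x z (S.erase v) := by
  intro a ha
  obtain ⟨b, hb, ha⟩ := mem_biUnion.1 ha
  obtain rfl | hbv := eq_or_ne b v
  · exact mem_union_left _ ha
  · exact mem_union_right _ (mem_biUnion.2 ⟨b, mem_erase.2 ⟨hbv, hb⟩, ha⟩)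

theorem card_colorsBeyond_le (hsub : ∀ v, G.degree v ≤ 3) {S : Finset V}
    (hS : ∀ b ∈ S, G.Adj zs b) : #(G.colorsBeyond c zs x z S) ≤ 2 * #S := by
  refine card_biUnion_le.trans <|
    (sum_le_card_nsmul S _ 2 fun b hb => ?_).trans (by simp [mul_comm])
  refine (card_colorsOutside_le (Y := {zs}) (by simp) (by simpa using (hS b hb).symm)).trans ?_
  have := hsub b
  simp only [card_singleton]
  omega

end SimpleGraph

namespace SimpleGraph.IsThread

variable [Fintype V] [DecidableEq V] {G : SimpleGraph V} [DecidableRel G.Adj]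
  {zs z x w : V} {c : Sym2 V → Fin 6}

theorem card_colorsOutside_zs_le (P : G.IsThread zs z x w) :
    #(G.colorsOutside c zs {z}) ≤ G.degree zs - 1 :=
  card_colorsOutside_le subset_rfl (by simpa using P.adj_z_zs.symm)

theorem card_colorsBeyond_erase_le (P : G.IsThread zs z x w) (hsub : ∀ v, G.degree v ≤ 3)
    {v : V} (hv : G.Adj zs v) (hvz : v ≠ z) :
    #(G.colorsBeyond c zs x z (((G.neighborFinset zs).erase z).erase v)) ≤ 2 := by
  refine (card_colorsBeyond_le hsub fun b hb => ?_).trans ?_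
  · exact (mem_neighborFinset _ _ _).1 (mem_of_mem_erase (mem_of_mem_erase hb))
  rw [card_erase_of_mem (mem_erase.2 ⟨hvz, (mem_neighborFinset _ _ _).2 hv⟩),
    card_erase_of_mem ((mem_neighborFinset _ _ _).2 P.adj_z_zs.symm),
    card_neighborFinset_eq_degree]
  have := hsub zs
  omega

theorem _root_.AdmissibleColors.of_notMem {α β : Fin 6} {v : V}
    (hβA : β ∉ G.colorsOutside c zs {z})
    (hβB : β ∉ G.colorsBeyond c zs x z (((G.neighborFinset zs).erase z).erase v))
    (hβv : ∀ d e, G.Adj v d → G.Adj d e → d ≠ x → d ≠ z → d ≠ zs → e ≠ z → e ≠ v →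
      β = c s(v, d) → c s(zs, v) ≠ c s(d, e))
    (hαR : α ∉ G.colorsOutside c w {z}) (hαβ : α ≠ β)
    (hαA : β = c s(x, w) → α ∉ G.colorsOutside c zs {z})
    (hαv : β ≠ c s(x, w) → α ≠ c s(zs, v)) :
    AdmissibleColors G c zs z x w α β := by
  refine ⟨hαβ, ?_, ?_, ?_, ?_, ?_⟩
  · exact fun y hy hyz hα => hαR (hα ▸ mem_colorsOutside hy (by simpa using hyz))
  · exact fun b hb hbz hβ => hβA (hβ ▸ mem_colorsOutside hb (by simpa using hbz))
  · intro b d e hb hbd hde hbz hdx hdz hdzs hez heb hβ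
    obtain rfl | hbv := eq_or_ne b v
    · exact hβv d e hbd hde hdx hdz hdzs hez heb hβ
    refine fun _ => hβB (hβ ▸ mem_colorsBeyond ?_ hbd (by simp [hdzs, hdx, hdz]))
    exact mem_erase.2 ⟨hbv, mem_erase.2 ⟨hbz, (mem_neighborFinset _ _ _).2 hb⟩⟩
  · intro d e hd hde hdz hez hezs hex hα hβ
    obtain rfl | hdv := eq_or_ne d v
    · by_cases hγ : β = c s(x, w)
      · exact hαA hγ (hα ▸ mem_colorsOutside hd (by simpa using hdz))
      · exact hαv hγ hα
    refine hβB (hβ ▸ mem_colorsBeyond ?_ hde (by simp [hezs, hex, hez]))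
    exact mem_erase.2 ⟨hdv, mem_erase.2 ⟨hdz, (mem_neighborFinset _ _ _).2 hd⟩⟩
  · exact fun hγ b hb hbz hα => hαA hγ (hα ▸ mem_colorsOutside hb (by simpa using hbz))

/-- Besides the at most three colors at `w`, `α` has to avoid only `β` and, depending on whether
`β` is the color of `xw`, either the at most two colors at `zs` or the single color of `zs v`. -/
theorem starEdgeColorable_of_beta (P : G.IsThread zs z x w) (hsub : ∀ v, G.degree v ≤ 3)
    (hc : IsStarEdgeColoring (G.deleteVert z) 6 c) (β : Fin 6) (v : V)
    (hβA : β ∉ G.colorsOutside c zs {z})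
    (hβB : β ∉ G.colorsBeyond c zs x z (((G.neighborFinset zs).erase z).erase v))
    (hβv : ∀ d e, G.Adj v d → G.Adj d e → d ≠ x → d ≠ z → d ≠ zs → e ≠ z → e ≠ v →
      β = c s(v, d) → c s(zs, v) ≠ c s(d, e)) :
    StarEdgeColorable G 6 := by
  set A := G.colorsOutside c zs {z}
  set R := G.colorsOutside c w {z}
  have hR : #R ≤ 3 := (card_colorsOutside_le (Y := ∅) (empty_subset _) (empty_subset _)).trans
    (by simpa using hsub w)
  have hA : #A ≤ 2 := P.card_colorsOutside_zs_le.trans (by have := hsub zs; omega)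
  suffices ∃ α, α ∉ R ∧ α ≠ β ∧ (β = c s(x, w) → α ∉ A) ∧ (β ≠ c s(x, w) → α ≠ c s(zs, v)) by
    obtain ⟨α, hαR, hαβ, hαA, hαv⟩ := this
    exact ⟨_, (AdmissibleColors.of_notMem hβA hβB hβv hαR hαβ hαA hαv).isStarEdgeColoring P hc⟩
  by_cases hγ : β = c s(x, w)
  · have hγR : c s(x, w) ∈ R :=
      Sym2.eq_swap (a := x) ▸ mem_colorsOutside P.adj_x_w.symm (by simpa using P.ne_x_z)
    obtain ⟨α, hα⟩ := exists_notMem_of_card_lt (T := R ∪ A) ((card_union_le _ _).trans_lt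
      (by omega))
    rw [mem_union, not_or] at hα
    exact ⟨α, hα.1, fun h => hα.1 (h ▸ hγ ▸ hγR), fun _ => hα.2, fun h => absurd hγ h⟩
  · obtain ⟨α, hα⟩ := exists_notMem_of_card_lt (T := insert β (insert (c s(zs, v)) R))
      ((card_insert_le _ _).trans_lt (by have := card_insert_le (c s(zs, v)) R; omega))
    simp only [mem_insert, not_or] at hα
    exact ⟨α, hα.2.2, hα.1, fun h => absurd h hγ, fun _ => hα.2.1⟩

theorem starEdgeColorable_of_card_le (P : G.IsThread zs z x w) (hsub : ∀ v, G.degree v ≤ 3)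
    (hc : IsStarEdgeColoring (G.deleteVert z) 6 c)
    (h : #(G.colorsOutside c zs {z} ∪
      G.colorsBeyond c zs x z ((G.neighborFinset zs).erase z)) ≤ 5) :
    StarEdgeColorable G 6 := by
  obtain ⟨β, hβ⟩ := exists_notMem_of_card_lt (h.trans_lt (by omega))
  rw [mem_union, not_or] at hβ
  refine P.starEdgeColorable_of_beta hsub hc β z hβ.1
    (fun h => hβ.2 (colorsBeyond_mono (erase_subset _ _) h)) ?_
  intro d e hzd _ hdx _ hdzs
  exact absurd (P.adj_z_iff.1 hzd) (by simp [hdx, hdzs])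

theorem starEdgeColorable_of_card_colorsOutside_le_one (P : G.IsThread zs z x w)
    (hsub : ∀ v, G.degree v ≤ 3) (hc : IsStarEdgeColoring (G.deleteVert z) 6 c) {v : V}
    (hv : G.Adj zs v) (hvz : v ≠ z) (h : #(G.colorsOutside c v {zs, x, z}) ≤ 1) :
    StarEdgeColorable G 6 := by
  refine P.starEdgeColorable_of_card_le hsub hc ?_
  have hA : #(G.colorsOutside c zs {z}) ≤ 2 :=
    P.card_colorsOutside_zs_le.trans (by have := hsub zs; omega)
  have hrest := P.card_colorsBeyond_erase_le (c := c) hsub hv hvz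
  calc _ ≤ #(G.colorsOutside c zs {z} ∪ (G.colorsOutside c v {zs, x, z} ∪
          G.colorsBeyond c zs x z (((G.neighborFinset zs).erase z).erase v))) :=
        card_le_card (union_subset_union subset_rfl (colorsBeyond_subset_union _ v))
    _ ≤ 5 := (card_union_le _ _).trans (add_le_add hA (card_union_le _ _) |>.trans (by omega))

theorem card_union_le_of_mem (P : G.IsThread zs z x w) (hsub : ∀ v, G.degree v ≤ 3) {v : V}
    (hv : G.Adj zs v) (hvz : v ≠ z) {a : Fin 6} (haBv : a ∈ G.colorsOutside c v {zs, x, z})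
    (ha : a ∈ G.colorsOutside c zs {z} ∪
      G.colorsBeyond c zs x z (((G.neighborFinset zs).erase z).erase v)) :
    #(G.colorsOutside c zs {z} ∪ G.colorsBeyond c zs x z ((G.neighborFinset zs).erase z)) ≤ 5 := by
  set A := G.colorsOutside c zs {z}
  set Bv := G.colorsOutside c v {zs, x, z}
  set Brest := G.colorsBeyond c zs x z (((G.neighborFinset zs).erase z).erase v)
  have hA : #A ≤ 2 := P.card_colorsOutside_zs_le.trans (by have := hsub zs; omega)
  have hBv : #Bv ≤ 2 := (card_colorsOutside_le (Y := {zs}) (by simp)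
    (by simpa using hv.symm)).trans (by have := hsub v; simp only [card_singleton]; omega)
  have hrest : #Brest ≤ 2 := P.card_colorsBeyond_erase_le hsub hv hvz
  have hsplit : A ∪ G.colorsBeyond c zs x z ((G.neighborFinset zs).erase z) ⊆
      (A ∪ Brest) ∪ Bv.erase a := by
    intro b hb
    rcases mem_union.1 hb with hb | hb
    · exact mem_union_left _ (mem_union_left _ hb)
    rcases mem_union.1 (colorsBeyond_subset_union _ v hb) with hb | hb
    · obtain rfl | hne := eq_or_ne b a
      · exact mem_union_left _ ha
      · exact mem_union_right _ (mem_erase.2 ⟨hne, hb⟩)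
    · exact mem_union_left _ (mem_union_right _ hb)
  refine (card_le_card hsplit).trans ((card_union_le _ _).trans ?_)
  have := card_union_le A Brest
  rw [card_erase_of_mem haBv]
  omega

theorem starEdgeColorable_of_leaf (P : G.IsThread zs z x w) (hsub : ∀ v, G.degree v ≤ 3)
    (hc : IsStarEdgeColoring (G.deleteVert z) 6 c) {v u : V} (hv : G.Adj zs v) (hvz : v ≠ z)
    (hu : G.Adj v u) (hleaf : ∀ e, G.Adj u e → e = v) : StarEdgeColorable G 6 := by
  have huz : u ≠ z := by
    rintro rfl
    exact P.ne_zs_x ((hleaf zs P.adj_z_zs).trans (hleaf x P.adj_z_x).symm)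
  have hux : u ≠ x := by rintro rfl; exact hvz (hleaf z P.adj_z_x.symm).symm
  have huzs : u ≠ zs := by rintro rfl; exact hvz (hleaf z P.adj_z_zs.symm).symm
  have hβv : c s(v, u) ∈ G.colorsOutside c v {zs, x, z} :=
    mem_colorsOutside hu (by simp [huzs, hux, huz])
  by_cases hβ : c s(v, u) ∈ G.colorsOutside c zs {z} ∪
      G.colorsBeyond c zs x z (((G.neighborFinset zs).erase z).erase v)
  · exact P.starEdgeColorable_of_card_le hsub hc (P.card_union_le_of_mem hsub hv hvz hβv hβ)
  rw [mem_union, not_or] at hβ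
  refine P.starEdgeColorable_of_beta hsub hc _ v hβ.1 hβ.2 ?_
  intro d e hvd hde _ hdz _ _ hev hβd
  obtain rfl : d = u := by
    by_contra hdu
    exact hc.proper ⟨hu, hvz, huz⟩ ⟨hvd, hvz, hdz⟩ (Ne.symm hdu) hβd
  exact absurd (hleaf e hde) hev

theorem degree_eq_three (P : G.IsThread zs z x w) (hsub : ∀ v, G.degree v ≤ 3)
    (hcrit : StarCritical G 6) : G.degree zs = 3 := by
  by_contra hne
  obtain ⟨c, hc⟩ := hcrit.2 z
  refine hcrit.1 (P.starEdgeColorable_of_card_le hsub hc ?_)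
  have hA := P.card_colorsOutside_zs_le (c := c)
  have hS : #((G.neighborFinset zs).erase z) = G.degree zs - 1 := by
    rw [card_erase_of_mem ((mem_neighborFinset _ _ _).2 P.adj_z_zs.symm),
      card_neighborFinset_eq_degree]
  have hB := card_colorsBeyond_le (c := c) (x := x) (z := z) hsub
    (S := (G.neighborFinset zs).erase z)
    fun b hb => (mem_neighborFinset _ _ _).1 (mem_of_mem_erase hb)
  have := hsub zs
  exact (card_union_le _ _).trans (by omega)

theorem not_adj (P : G.IsThread zs z x w) (hsub : ∀ v, G.degree v ≤ 3)
    (hcrit : StarCritical G 6) : ¬ G.Adj zs w := fun hzsw => by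
  obtain ⟨c, hc⟩ := hcrit.2 z
  refine hcrit.1 (P.starEdgeColorable_of_card_colorsOutside_le_one hsub hc hzsw
    P.ne_z_w.symm ?_)
  refine (card_colorsOutside_le (Y := {zs, x}) (by simp [insert_subset_iff])
    (by simp [insert_subset_iff, hzsw.symm, P.adj_x_w.symm])).trans ?_
  rw [card_pair P.ne_zs_x]
  have := hsub w
  omega

theorem degree_eq_three_of_adj (P : G.IsThread zs z x w) (hsub : ∀ v, G.degree v ≤ 3)
    (hcrit : StarCritical G 6) {v : V} (hv : G.Adj zs v) (hvz : v ≠ z) : G.degree v = 3 := by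
  by_contra hne
  obtain ⟨c, hc⟩ := hcrit.2 z
  refine hcrit.1 (P.starEdgeColorable_of_card_colorsOutside_le_one hsub hc hv hvz ?_)
  refine (card_colorsOutside_le (Y := {zs}) (by simp) (by simpa using hv.symm)).trans ?_
  have := hsub v
  simp only [card_singleton]
  omega

theorem two_le_degree_of_adj (P : G.IsThread zs z x w) (hsub : ∀ v, G.degree v ≤ 3)
    (hcrit : StarCritical G 6) {v u : V} (hv : G.Adj zs v) (hvz : v ≠ z) (hu : G.Adj v u) :
    2 ≤ G.degree u := by
  by_contra hlt
  obtain ⟨c, hc⟩ := hcrit.2 z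
  refine hcrit.1 (P.starEdgeColorable_of_leaf hsub hc hv hvz hu fun e he => ?_)
  refine card_le_one.1 ?_ e ((mem_neighborFinset _ _ _).2 he) v
    ((mem_neighborFinset _ _ _).2 hu.symm)
  rw [card_neighborFinset_eq_degree]
  omega

end SimpleGraph.IsThread

end

theorem lemma2d_general {V : Type*} [Fintype V] [DecidableEq V] (G : SimpleGraph V)
    [DecidableRel G.Adj] (hsub : ∀ v : V, G.degree v ≤ 3)
    (hcrit : StarCritical G 6)
    (x z w : V) (hzw : z ≠ w)
    (hNx : G.neighborSet x = {z, w})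
    (zs : V) (hzsx : zs ≠ x)
    (hNz : G.neighborSet z = {x, zs}) :
    ¬ G.Adj zs w ∧ G.degree zs = 3 ∧ G.degree w = 3 ∧
      ∀ v ∈ (G.neighborSet w ∪ G.neighborSet zs) \ {x, z},
        G.degree v = 3 ∧ ∀ u ∈ G.neighborSet v, 2 ≤ G.degree u := by
  have P : G.IsThread zs z x w := ⟨hNz, hNx, hzsx, hzw⟩
  refine ⟨P.not_adj hsub hcrit, P.degree_eq_three hsub hcrit, P.symm.degree_eq_three hsub hcrit,
    fun v ⟨hv, hvxz⟩ => ?_⟩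
  simp only [Set.mem_insert_iff, Set.mem_singleton_iff, not_or] at hvxz
  rcases hv with hwv | hzsv
  · exact ⟨P.symm.degree_eq_three_of_adj hsub hcrit hwv hvxz.1,
      fun u => P.symm.two_le_degree_of_adj hsub hcrit hwv hvxz.1⟩
  · exact ⟨P.degree_eq_three_of_adj hsub hcrit hzsv hvxz.2,
      fun u => P.two_le_degree_of_adj hsub hcrit hzsv hvxz.2⟩

/-- Lemma 2(d): `k = 6` case. If `d(z) = 2` with `N_G(z) = {x, z*}`, then `z* w ∉ E(G)`,
`d(z*) = d(w) = 3`, and every `v ∈ (N_G(w) ∪ N_G(z*)) \ {x, z}` has degree 3 with all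
of its neighbors of degree at least 2. -/
theorem lemma2d {V : Type*} [Fintype V] [DecidableEq V] (G : SimpleGraph V)
    [DecidableRel G.Adj] (hsub : ∀ v : V, G.degree v ≤ 3)
    (hcrit : StarCritical G 6)
    (x z w : V) (hx : G.degree x = 2) (hzw : z ≠ w)
    (hNx : G.neighborSet x = {z, w}) (hd : G.degree z ≤ G.degree w)
    (hz : G.degree z = 2) (zs : V) (hzsx : zs ≠ x)
    (hNz : G.neighborSet z = {x, zs}) :
    ¬ G.Adj zs w ∧ G.degree zs = 3 ∧ G.degree w = 3 ∧
      ∀ v ∈ (G.neighborSet w ∪ G.neighborSet zs) \ {x, z},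
        G.degree v = 3 ∧ ∀ u ∈ G.neighborSet v, 2 ≤ G.degree u :=
  lemma2d_general G hsub hcrit x z w hzw hNx zs hzsx hNz
end

section
/- Let G be a star 6-critical subcubic simple graph, and let v be a vertex with N_G(v) = {v₁, v₂, v₃}, where d_G(v₁) ≥ d_G(v₂) ≥ d_G(v₃) = 2, and let v₃* be the neighbor of v₃ other than v. If d_G(v₃*) = 2, then d_G(v₂) = 3 and every vertex u ∈ N_G(v₁) ∪ N_G(v₂) has degree at least 2 in G. -/
open SimpleGraph

/-!
By criticality `G - v₃` has a star 6-edge-coloring `c`. If `d(v₂) = 2`, or a neighbor of `v₁` or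
`v₂` is a leaf, we extend `c` to `G`, contradicting `χ'_s(G) > 6`.

We add `v v₃` and then `v₃ v₃*`; a new edge lies on a bicolored 4-path only as an end edge or as
a middle edge. Let `a, b` be the neighbors of `v` other than `v₃`, with the leaf (if any) at `a`.
Give `v v₃` a color `e` missing at `b`, different from `c(v a)` and closing no bicolored path
`v₃ v a y z`: at most five colors are excluded, since either `b` carries only two colors or the
edge from `a` to its leaf continues no path. Then give `v₃ v₃*` a color `f` avoiding `e`, the at
most three colors at the other neighbor `t` of `v₃*`, `c(v a)`, and also `c(v b)` when `e` occurs
at `t`: again at most five colors.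
-/

section

variable {V : Type*}

@[simp]
lemma SimpleGraph.deleteVert_adj {G : SimpleGraph V} {x p q : V} :
    (G.deleteVert x).Adj p q ↔ G.Adj p q ∧ p ≠ x ∧ q ≠ x :=
  Iff.rfl

lemma SimpleGraph.deleteVert_sup_edge_sup_edge {G : SimpleGraph V} {x v w : V}
    (hx : ∀ y, G.Adj x y ↔ y = v ∨ y = w) : G.deleteVert x ⊔ edge v x ⊔ edge x w = G := by
  have hxv : x ≠ v := G.ne_of_adj ((hx v).mpr (Or.inl rfl))
  have hxw : x ≠ w := G.ne_of_adj ((hx w).mpr (Or.inr rfl))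
  ext p q
  simp only [sup_adj, deleteVert_adj, edge_adj]
  by_cases hp : p = x
  · subst hp; rw [hx]; grind
  by_cases hq : q = x
  · subst hq; rw [G.adj_comm, hx]; grind
  · simp [hp, hq]

lemma SimpleGraph.exists_adj_iff_of_degree_eq_two [DecidableEq V] {G : SimpleGraph V} {w x : V}
    [Fintype (G.neighborSet w)] (h : G.degree w = 2) (hx : G.Adj w x) :
    ∃ t, t ≠ x ∧ ∀ y, G.Adj w y ↔ y = x ∨ y = t := by
  have hxmem : x ∈ G.neighborFinset w := (mem_neighborFinset G w x).mpr hx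
  obtain ⟨t, ht⟩ := Finset.card_eq_one.mp (show ((G.neighborFinset w).erase x).card = 1 by
    rw [Finset.card_erase_of_mem hxmem, card_neighborFinset_eq_degree, h])
  refine ⟨t, fun htx => ?_, fun y => ?_⟩
  · have : t ∈ (G.neighborFinset w).erase x := ht ▸ Finset.mem_singleton_self t
    exact Finset.ne_of_mem_erase this htx
  · rw [← mem_neighborFinset, ← Finset.insert_erase hxmem, ht]
    simp

lemma SimpleGraph.eq_of_adj_of_degree_le_one {G : SimpleGraph V} {u a z : V}
    [Fintype (G.neighborSet u)] (h : G.degree u ≤ 1) (ha : G.Adj u a) (hz : G.Adj u z) :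
    z = a :=
  Finset.card_le_one.mp (by rwa [card_neighborFinset_eq_degree]) z
    ((mem_neighborFinset ..).mpr hz) a ((mem_neighborFinset ..).mpr ha)

lemma SimpleGraph.ncard_neighborSet_deleteVert_le (G : SimpleGraph V) (x u : V)
    [Fintype (G.neighborSet u)] : ((G.deleteVert x).neighborSet u).ncard ≤ G.degree u := by
  rw [← card_neighborFinset_eq_degree, ← Set.ncard_coe_finset, coe_neighborFinset]
  exact Set.ncard_le_ncard fun _ hy => hy.1

/-- Coloring a new edge `u v` with `e` creates no bicolored path `u v a y z`. -/
def NoBicoloredPathVia (H : SimpleGraph V) {k : ℕ} (c : Sym2 V → Fin k) (v a : V)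
    (e : Fin k) : Prop :=
  ∀ y z, H.Adj a y → H.Adj y z → y ≠ v → z ≠ a → c s(a, y) = e → c s(v, a) ≠ c s(y, z)

lemma ne_of_sym2_ne {p q r : V} (h : s(p, q) ≠ s(q, r)) : p ≠ r :=
  fun hpr => h (hpr ▸ Sym2.eq_swap)

lemma update_apply_of_mem_edgeSet [DecidableEq V] {H : SimpleGraph V} {k : ℕ}
    (c : Sym2 V → Fin k) {a b : V} (hab : ¬ H.Adj a b) (κ : Fin k) {e : Sym2 V}
    (he : e ∈ H.edgeSet) : Function.update c s(a, b) κ e = c e :=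
  Function.update_of_ne (fun h => hab (by rwa [h] at he)) _ _

lemma adj_of_sup_edge_adj {H : SimpleGraph V} {a b p q : V} (h : (H ⊔ edge a b).Adj p q)
    (hne : s(p, q) ≠ s(a, b)) : H.Adj p q :=
  h.resolve_right fun h' => hne ((adj_edge _ _).mp h').1.symm

lemma colorsAt_sup_edge_subset [DecidableEq V] {H : SimpleGraph V} {k : ℕ}
    (c : Sym2 V → Fin k) {a b : V} (hab : ¬ H.Adj a b) (κ : Fin k) (u : V) :
    colorsAt (H ⊔ edge a b) (Function.update c s(a, b) κ) u ⊆ insert κ (colorsAt H c u) := by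
  rintro _ ⟨w, huw, rfl⟩
  by_cases h : s(u, w) = s(a, b)
  · exact Or.inl (by rw [h, Function.update_self])
  · have huw' := adj_of_sup_edge_adj huw h
    exact Or.inr ⟨w, huw', (update_apply_of_mem_edgeSet c hab κ huw').symm⟩

theorem IsStarEdgeColoring.sup_edge_proper [DecidableEq V] {H : SimpleGraph V} {k : ℕ}
    {c : Sym2 V → Fin k} (hc : IsStarEdgeColoring H k c) {a b : V} (hab : ¬ H.Adj a b)
    {κ : Fin k} (ha : κ ∉ colorsAt H c a) (hb : κ ∉ colorsAt H c b) :
    ∀ e₁ ∈ (H ⊔ edge a b).edgeSet, ∀ e₂ ∈ (H ⊔ edge a b).edgeSet, e₁ ≠ e₂ →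
      (∃ p, p ∈ e₁ ∧ p ∈ e₂) → Function.update c s(a, b) κ e₁ ≠ Function.update c s(a, b) κ e₂ := by
  have hedge : ∀ e ∈ (H ⊔ edge a b).edgeSet, e ∈ H.edgeSet ∨ e = s(a, b) := fun e he =>
    ((edgeSet_sup H _).subset he).imp_right (edgeSet_edge_subset ·)
  have hfresh : ∀ e ∈ H.edgeSet, (∃ p, p ∈ s(a, b) ∧ p ∈ e) → κ ≠ c e := by
    rintro e he ⟨p, hp, hpe⟩ hκ
    obtain ⟨q, rfl⟩ := Sym2.mem_iff_exists.mp hpe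
    rcases Sym2.mem_iff.mp hp with rfl | rfl
    · exact ha ⟨q, he, hκ.symm⟩
    · exact hb ⟨q, he, hκ.symm⟩
  intro e₁ he₁ e₂ he₂ hne hshare
  rcases hedge e₁ he₁ with h₁ | rfl <;> rcases hedge e₂ he₂ with h₂ | rfl
  · rw [update_apply_of_mem_edgeSet c hab κ h₁, update_apply_of_mem_edgeSet c hab κ h₂]
    exact hc.1 e₁ h₁ e₂ h₂ hne hshare
  · rw [update_apply_of_mem_edgeSet c hab κ h₁, Function.update_self]
    obtain ⟨p, hp₁, hp₂⟩ := hshare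
    exact (hfresh e₁ h₁ ⟨p, hp₂, hp₁⟩).symm
  · rw [update_apply_of_mem_edgeSet c hab κ h₂, Function.update_self]
    exact hfresh e₂ h₂ hshare
  · exact absurd rfl hne

/-- A bicolored path through the new edge `ab` has it as an end edge (`hend`) or as a middle
edge (`hmid`). -/
theorem IsStarEdgeColoring.sup_edge [DecidableEq V] {H : SimpleGraph V} {k : ℕ}
    {c : Sym2 V → Fin k} (hc : IsStarEdgeColoring H k c) {a b : V} (hab : ¬ H.Adj a b)
    {κ : Fin k} (ha : κ ∉ colorsAt H c a) (hb : κ ∉ colorsAt H c b)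
    (hend : ∀ u u', s(u, u') = s(a, b) → ∀ x, H.Adj u' x → NoBicoloredPathVia H c u' x κ)
    (hmid : ∀ u u' x y z, s(u, u') = s(a, b) → H.Adj x u → H.Adj u' y → H.Adj y z →
      z ≠ u' → c s(y, z) = κ → c s(x, u) ≠ c s(u', y)) :
    IsStarEdgeColoring (H ⊔ edge a b) k (Function.update c s(a, b) κ) := by
  refine ⟨hc.sup_edge_proper hab ha hb, fun w₀ w₁ w₂ w₃ w₄ h₀₁ h₁₂ h₂₃ h₃₄ hdist => ?_⟩
  simp only [List.pairwise_cons, List.mem_cons, List.not_mem_nil, or_false, forall_eq_or_imp,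
    forall_eq, false_implies, implies_true, List.Pairwise.nil, and_true] at hdist
  obtain ⟨⟨d₁₂, d₁₃, d₁₄⟩, ⟨d₂₃, d₂₄⟩, d₃₄⟩ := hdist
  have hold : ∀ {p q}, H.Adj p q → Function.update c s(a, b) κ s(p, q) = c s(p, q) :=
    fun h => update_apply_of_mem_edgeSet c hab κ h
  have csw : ∀ p q, c s(p, q) = c s(q, p) := fun _ _ => congrArg c Sym2.eq_swap
  rintro ⟨hA, hB⟩
  by_cases n₁ : s(w₀, w₁) = s(a, b)
  · have o₂ := adj_of_sup_edge_adj h₁₂ (n₁ ▸ d₁₂.symm)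
    have o₃ := adj_of_sup_edge_adj h₂₃ (n₁ ▸ d₁₃.symm)
    have o₄ := adj_of_sup_edge_adj h₃₄ (n₁ ▸ d₁₄.symm)
    rw [n₁, Function.update_self, hold o₃] at hA
    rw [hold o₂, hold o₄] at hB
    exact hend w₀ w₁ n₁ w₂ o₂ w₃ w₄ o₃ o₄ (ne_of_sym2_ne d₂₃).symm (ne_of_sym2_ne d₃₄).symm
      hA.symm hB
  have o₁ := adj_of_sup_edge_adj h₀₁ n₁
  by_cases n₂ : s(w₁, w₂) = s(a, b)
  · have o₃ := adj_of_sup_edge_adj h₂₃ (n₂ ▸ d₂₃.symm)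
    have o₄ := adj_of_sup_edge_adj h₃₄ (n₂ ▸ d₂₄.symm)
    rw [hold o₁, hold o₃] at hA
    rw [n₂, Function.update_self, hold o₄] at hB
    exact hmid w₁ w₂ w₀ w₃ w₄ n₂ o₁ o₃ o₄ (ne_of_sym2_ne d₃₄).symm hB.symm hA
  have o₂ := adj_of_sup_edge_adj h₁₂ n₂
  by_cases n₃ : s(w₂, w₃) = s(a, b)
  · have o₄ := adj_of_sup_edge_adj h₃₄ (n₃ ▸ d₃₄.symm)
    rw [hold o₁, n₃, Function.update_self] at hA
    rw [hold o₂, hold o₄] at hB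
    exact hmid w₃ w₂ w₄ w₁ w₀ (Sym2.eq_swap.trans n₃) o₄.symm o₂.symm o₁.symm
      (ne_of_sym2_ne d₁₂) ((csw _ _).trans hA) ((csw _ _).trans (hB.symm.trans (csw _ _)))
  have o₃ := adj_of_sup_edge_adj h₂₃ n₃
  by_cases n₄ : s(w₃, w₄) = s(a, b)
  · rw [hold o₁, hold o₃] at hA
    rw [hold o₂, n₄, Function.update_self] at hB
    exact hend w₄ w₃ (Sym2.eq_swap.trans n₄) w₂ o₃.symm w₁ w₀ o₂.symm o₁.symm
      (ne_of_sym2_ne d₂₃) (ne_of_sym2_ne d₁₂) ((csw _ _).trans hB)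
      ((csw _ _).trans (hA.symm.trans (csw _ _)))
  have o₄ := adj_of_sup_edge_adj h₃₄ n₄
  rw [hold o₁, hold o₃] at hA
  rw [hold o₂, hold o₄] at hB
  exact hc.2 w₀ w₁ w₂ w₃ w₄ o₁ o₂ o₃ o₄ (by simp [*]) ⟨hA, hB⟩

theorem IsStarEdgeColoring.sup_edge_of_isolated [DecidableEq V] {H : SimpleGraph V} {k : ℕ}
    {c : Sym2 V → Fin k} (hc : IsStarEdgeColoring H k c) {v x : V} (hx : ∀ p, ¬ H.Adj x p)
    {e : Fin k} (he : e ∉ colorsAt H c v)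
    (he_path : ∀ a, H.Adj v a → NoBicoloredPathVia H c v a e) :
    IsStarEdgeColoring (H ⊔ edge v x) k (Function.update c s(v, x) e) := by
  refine hc.sup_edge (fun h => hx v h.symm) he (fun ⟨p, h, _⟩ => hx p h) ?_ ?_
  · intro u u' huu' a hu'a
    rcases Sym2.eq_iff.mp huu' with ⟨h, h'⟩ | ⟨h, h'⟩ <;> subst u u'
    · exact absurd hu'a (hx a)
    · exact he_path a hu'a
  · intro u u' p q r huu' hpu hu'q _ _ _
    rcases Sym2.eq_iff.mp huu' with ⟨h, h'⟩ | ⟨h, h'⟩ <;> subst u u'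
    · exact absurd hu'q (hx q)
    · exact absurd hpu.symm (hx p)

theorem IsStarEdgeColoring.sup_edge_of_leaves [DecidableEq V] {H : SimpleGraph V} {k : ℕ}
    {c : Sym2 V → Fin k} (hc : IsStarEdgeColoring H k c) {x v w t : V}
    (hx : ∀ p, H.Adj x p ↔ p = v) (hw : ∀ p, H.Adj w p ↔ p = t) (hvw : v ≠ w) {f : Fin k}
    (hfv : f ≠ c s(x, v)) (hft : f ∉ colorsAt H c t) (hf_path : NoBicoloredPathVia H c x v f)
    (hf_mid : c s(t, w) = c s(x, v) → ∀ z, H.Adj v z → z ≠ x → c s(v, z) ≠ f) :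
    IsStarEdgeColoring (H ⊔ edge x w) k (Function.update c s(x, w) f) := by
  have hft' : ∀ p, H.Adj t p → c s(t, p) ≠ f := fun p htp hcol => hft ⟨p, htp, hcol⟩
  refine hc.sup_edge (fun h => hvw ((hx w).mp h).symm) ?_ ?_ ?_ ?_
  · rintro ⟨p, hp, hcol⟩
    rw [(hx p).mp hp] at hcol
    exact hfv hcol.symm
  · rintro ⟨p, hp, hcol⟩
    have := (hw p).mp hp
    subst p
    exact hft' w hp.symm (by rw [Sym2.eq_swap, hcol])
  · intro u u' huu' a hu'a
    rcases Sym2.eq_iff.mp huu' with ⟨h, h'⟩ | ⟨h, h'⟩ <;> subst u u'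
    · rw [(hw a).mp hu'a]
      exact fun y _ hty _ _ _ hcol => absurd hcol (hft' y hty)
    · rw [(hx a).mp hu'a]
      exact hf_path
  · intro u u' p q r huu' hpu hu'q hqr hru' hcol
    rcases Sym2.eq_iff.mp huu' with ⟨h, h'⟩ | ⟨h, h'⟩ <;> subst u u'
    · rw [(hw q).mp hu'q] at hqr hcol
      exact absurd hcol (hft' r hqr)
    · have := (hw p).mp hpu.symm
      have := (hx q).mp hu'q
      subst p q
      exact fun heq => hf_mid heq r hqr hru' hcol

theorem IsStarEdgeColoring.starEdgeColorable_of_deleteVert [DecidableEq V] {G : SimpleGraph V}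
    {k : ℕ} {c : Sym2 V → Fin k} {x v w t : V} (hc : IsStarEdgeColoring (G.deleteVert x) k c)
    (hx : ∀ y, G.Adj x y ↔ y = v ∨ y = w) (hvw : v ≠ w) (hw : ∀ y, G.Adj w y ↔ y = x ∨ y = t)
    (htx : t ≠ x) {e f : Fin k} (he : e ∉ colorsAt (G.deleteVert x) c v)
    (he_path : ∀ a, (G.deleteVert x).Adj v a → NoBicoloredPathVia (G.deleteVert x) c v a e)
    (hfe : f ≠ e) (hft : f ∉ colorsAt (G.deleteVert x) c t)
    (hfv : ∀ y, (G.deleteVert x).Adj v y →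
      (e = c s(w, t) ∨ e ∈ colorsAt (G.deleteVert x) c y) → c s(v, y) ≠ f) :
    StarEdgeColorable G k := by
  set H := G.deleteVert x
  have hxv : x ≠ v := G.ne_of_adj ((hx v).mpr (Or.inl rfl))
  have hxw : x ≠ w := G.ne_of_adj ((hx w).mpr (Or.inr rfl))
  have hHx : ∀ p, ¬ H.Adj x p := fun _ h => h.2.1 rfl
  have hvx : ¬ H.Adj v x := fun h => hHx v h.symm
  have hc₁ := hc.sup_edge_of_isolated hHx he he_path
  set H₁ := H ⊔ edge v x
  set c₁ := Function.update c s(v, x) e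
  have hH₁x : ∀ p, H₁.Adj x p ↔ p = v := by
    intro p
    simp only [H₁, sup_adj, edge_adj]
    grind
  have hH₁ : ∀ p q, H₁.Adj p q → p ≠ x → q ≠ x → H.Adj p q := fun p q h hp hq =>
    h.resolve_right fun h' => by rw [edge_adj] at h'; grind
  have hwt : H.Adj w t := ⟨(hw t).mpr (Or.inr rfl), hxw.symm, htx⟩
  have hH₁w : ∀ p, H₁.Adj w p ↔ p = t := by
    refine fun p => ⟨fun hp => ?_, fun hp => hp ▸ Or.inl hwt⟩
    have hpx : p ≠ x := fun h => hvw ((hH₁x w).mp (h ▸ hp.symm)).symm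
    exact ((hw p).mp (hH₁ w p hp hxw.symm hpx).1).resolve_left hpx
  have hc₁H : ∀ p q, H.Adj p q → c₁ s(p, q) = c s(p, q) :=
    fun _ _ h => update_apply_of_mem_edgeSet c hvx e h
  have hc₁x : c₁ s(x, v) = e := by rw [Sym2.eq_swap]; exact Function.update_self ..
  have hc₂ := hc₁.sup_edge_of_leaves hH₁x hH₁w hvw (hc₁x ▸ hfe)
    (fun h => (colorsAt_sup_edge_subset c hvx e t h).elim hfe hft) ?_ ?_
  · exact ⟨_, SimpleGraph.deleteVert_sup_edge_sup_edge hx ▸ hc₂⟩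
  · intro y z hvy hyz hyx _ hcol heq
    have hvy' := hH₁ v y hvy hxv.symm hyx
    have hzx : z ≠ x := fun h => hvy'.ne ((hH₁x y).mp (h ▸ hyz).symm).symm
    have hyz' := hH₁ y z hyz hyx hzx
    exact hfv y hvy' (Or.inr ⟨z, hyz', by rw [← hc₁H _ _ hyz', ← heq, hc₁x]⟩)
      (by rw [← hc₁H _ _ hvy']; exact hcol)
  · intro heq z hvz hzx hcol
    have hvz' := hH₁ v z hvz hxv.symm hzx
    exact hfv z hvz' (Or.inl (by rw [← hc₁x, ← heq, hc₁H _ _ hwt.symm, Sym2.eq_swap]))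
      (by rw [← hc₁H _ _ hvz']; exact hcol)

lemma exists_notMem_of_ncard_lt {k : ℕ} {S : Set (Fin k)} (h : S.ncard < k) : ∃ f, f ∉ S :=
  (Set.ne_univ_iff_exists_notMem S).mp fun hS => by simp [hS] at h

lemma ncard_colorsAt_le [Finite V] (H : SimpleGraph V) {k : ℕ} (c : Sym2 V → Fin k) (u : V) :
    (colorsAt H c u).ncard ≤ (H.neighborSet u).ncard :=
  Set.ncard_image_le (f := fun w => c s(u, w))

lemma exists_color_notMem_of_ncard_le_three {S : Set (Fin 6)} (hS : S.ncard ≤ 3)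
    (e α β : Fin 6) : ∃ f, f ∉ S ∧ f ≠ e ∧ f ≠ α ∧ (e ∈ S → f ≠ β) := by
  by_cases he : e ∈ S
  · obtain ⟨f, hf⟩ := exists_notMem_of_ncard_lt (S := insert α (insert β S))
      ((Set.ncard_insert_le _ _).trans_lt (by linarith [Set.ncard_insert_le β S]))
    simp only [Set.mem_insert_iff, not_or] at hf
    exact ⟨f, hf.2.2, fun h => hf.2.2 (h ▸ he), hf.1, fun _ => hf.2.1⟩
  · obtain ⟨f, hf⟩ := exists_notMem_of_ncard_lt (S := insert e (insert α S))
      ((Set.ncard_insert_le _ _).trans_lt (by linarith [Set.ncard_insert_le α S]))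
    simp only [Set.mem_insert_iff, not_or] at hf
    exact ⟨f, hf.2.2, hf.1, hf.2.1, fun h => absurd h he⟩

lemma exists_firstColor_of_ncard_le_two {H : SimpleGraph V} (c : Sym2 V → Fin 6) {v a b : V}
    (hav : H.Adj a v) (ha : (colorsAt H c a).ncard ≤ 3) (hb : (colorsAt H c b).ncard ≤ 2) :
    ∃ e, e ∉ colorsAt H c b ∧ e ≠ c s(v, a) ∧ NoBicoloredPathVia H c v a e := by
  obtain ⟨e, he⟩ := exists_notMem_of_ncard_lt (S := colorsAt H c a ∪ colorsAt H c b)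
    ((Set.ncard_union_le _ _).trans_lt (by omega))
  simp only [Set.mem_union, not_or] at he
  refine ⟨e, he.2, fun h => he.1 ⟨v, hav, by rw [h, Sym2.eq_swap]⟩, ?_⟩
  exact fun y _ hay _ _ _ hcol => absurd ⟨y, hay, hcol⟩ he.1

lemma exists_firstColor_of_adj_leaf [Finite V] {H : SimpleGraph V} (c : Sym2 V → Fin 6)
    {v a b u : V} (hav : H.Adj a v) (hau : H.Adj a u) (huv : u ≠ v) (hu : ∀ z, H.Adj u z → z = a)
    (ha : (H.neighborSet a).ncard ≤ 3) (hb : (colorsAt H c b).ncard ≤ 3) :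
    ∃ e, e ∉ colorsAt H c b ∧ e ≠ c s(v, a) ∧ NoBicoloredPathVia H c v a e := by
  have hrest : (H.neighborSet a \ {v, u}).ncard ≤ 1 := by
    have hpair : {v, u} ⊆ H.neighborSet a := Set.insert_subset hav (Set.singleton_subset_iff.mpr hau)
    have := Set.ncard_sdiff_add_ncard_of_subset hpair
    rw [Set.ncard_pair huv.symm] at this
    omega
  set R := (fun y => c s(a, y)) '' (H.neighborSet a \ {v, u})
  obtain ⟨e, he⟩ := exists_notMem_of_ncard_lt (S := insert (c s(v, a)) (colorsAt H c b ∪ R))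
    ((Set.ncard_insert_le _ _).trans_lt (by
      linarith [Set.ncard_union_le (colorsAt H c b) R, Set.ncard_image_le (f := fun y => c s(a, y))
        (s := H.neighborSet a \ {v, u})]))
  simp only [Set.mem_insert_iff, Set.mem_union, not_or] at he
  refine ⟨e, he.2.1, he.1, fun y z hay hyz hyv hza hcol => ?_⟩
  have hyu : y ≠ u := by
    rintro rfl
    exact hza (hu z hyz)
  exact absurd ⟨y, ⟨hay, by simp [hyv, hyu]⟩, hcol⟩ he.2.2

theorem starEdgeColorable_of_firstColor [DecidableEq V] {G : SimpleGraph V}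
    {c : Sym2 V → Fin 6} {x v w t a b : V} (hc : IsStarEdgeColoring (G.deleteVert x) 6 c)
    (hv : ∀ y, G.Adj v y ↔ y = a ∨ y = b ∨ y = x) (hx : ∀ y, G.Adj x y ↔ y = v ∨ y = w)
    (hvw : v ≠ w) (hw : ∀ y, G.Adj w y ↔ y = x ∨ y = t) (htx : t ≠ x)
    (ht : (colorsAt (G.deleteVert x) c t).ncard ≤ 3) {e : Fin 6}
    (heb : e ∉ colorsAt (G.deleteVert x) c b) (hea : e ≠ c s(v, a))
    (he_path : NoBicoloredPathVia (G.deleteVert x) c v a e) :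
    StarEdgeColorable G 6 := by
  set H := G.deleteVert x
  have hHv : ∀ y, H.Adj v y → y = a ∨ y = b := fun y hy =>
    ((hv y).mp hy.1).imp_right fun h => h.resolve_right hy.2.2
  have hwt : H.Adj w t :=
    ⟨(hw t).mpr (Or.inr rfl), G.ne_of_adj ((hx w).mpr (Or.inr rfl)) |>.symm, htx⟩
  obtain ⟨f, hft, hfe, hfa, hfb⟩ :=
    exists_color_notMem_of_ncard_le_three ht e (c s(v, a)) (c s(v, b))
  refine hc.starEdgeColorable_of_deleteVert hx hvw hw htx ?_ ?_ hfe hft ?_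
  · rintro ⟨y, hvy, hcol⟩
    rcases hHv y hvy with rfl | rfl
    · exact hea hcol.symm
    · exact heb ⟨v, hvy.symm, by rw [Sym2.eq_swap, hcol]⟩
  · intro y hvy
    rcases hHv y hvy with rfl | rfl
    · exact he_path
    · exact fun z _ hbz _ _ _ hcol _ => heb ⟨z, hbz, hcol⟩
  · intro y hvy hcase
    rcases hHv y hvy with rfl | rfl
    · exact hfa.symm
    · refine (hfb ?_).symm
      rcases hcase with hcase | hcase
      · exact ⟨w, hwt.symm, by rw [hcase, Sym2.eq_swap]⟩
      · exact absurd hcase heb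

theorem starEdgeColorable_of_degree_le_two_or_adj_leaf [Fintype V] [DecidableEq V]
    {G : SimpleGraph V} [DecidableRel G.Adj] (hsub : ∀ u, G.degree u ≤ 3) {c : Sym2 V → Fin 6}
    {x v w t a b : V} (hc : IsStarEdgeColoring (G.deleteVert x) 6 c)
    (hv : ∀ y, G.Adj v y ↔ y = a ∨ y = b ∨ y = x) (hax : a ≠ x)
    (hx : ∀ y, G.Adj x y ↔ y = v ∨ y = w) (hvw : v ≠ w) (hw : ∀ y, G.Adj w y ↔ y = x ∨ y = t)
    (htx : t ≠ x) (hcase : G.degree b ≤ 2 ∨ ∃ u, G.Adj a u ∧ G.degree u ≤ 1) :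
    StarEdgeColorable G 6 := by
  set H := G.deleteVert x
  have hcolors : ∀ u, (colorsAt H c u).ncard ≤ G.degree u := fun u =>
    (ncard_colorsAt_le H c u).trans (G.ncard_neighborSet_deleteVert_le x u)
  have hav : H.Adj a v :=
    ⟨((hv a).mpr (Or.inl rfl)).symm, hax, (G.ne_of_adj ((hx v).mpr (Or.inl rfl))).symm⟩
  obtain ⟨e, heb, hea, he_path⟩ :
      ∃ e, e ∉ colorsAt H c b ∧ e ≠ c s(v, a) ∧ NoBicoloredPathVia H c v a e := by
    rcases hcase with hb | ⟨u, hau, hu⟩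
    · exact exists_firstColor_of_ncard_le_two c hav ((hcolors a).trans (hsub a))
        ((hcolors b).trans hb)
    · have hleaf : ∀ z, G.Adj u z → z = a := fun z => G.eq_of_adj_of_degree_le_one hu hau.symm
      have hux : u ≠ x := fun h => hvw <|
        (hleaf v (h ▸ (hx v).mpr (Or.inl rfl))).trans (hleaf w (h ▸ (hx w).mpr (Or.inr rfl))).symm
      have huv : u ≠ v := fun h => hax (hleaf x (h ▸ (hv x).mpr (by simp))).symm
      exact exists_firstColor_of_adj_leaf c hav ⟨hau, hax, hux⟩ huv (fun z hz => hleaf z hz.1)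
        ((G.ncard_neighborSet_deleteVert_le x a).trans (hsub a)) ((hcolors b).trans (hsub b))
  exact starEdgeColorable_of_firstColor hc hv hx hvw hw htx ((hcolors t).trans (hsub t)) heb hea
    he_path

end

theorem cor3b_general {V : Type*} [Fintype V] [DecidableEq V] (G : SimpleGraph V)
    [DecidableRel G.Adj] (hsub : ∀ u : V, G.degree u ≤ 3)
    (hcrit : StarCritical G 6)
    (v v₁ v₂ v₃ : V) (h13 : v₁ ≠ v₃) (h23 : v₂ ≠ v₃)
    (hN : G.neighborSet v = {v₁, v₂, v₃})
    (hd3 : G.degree v₃ = 2)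
    (v3s : V) (hadj : G.Adj v₃ v3s) (hne : v3s ≠ v)
    (hd3s : G.degree v3s = 2) :
    G.degree v₂ = 3 ∧ ∀ u ∈ G.neighborSet v₁ ∪ G.neighborSet v₂, 2 ≤ G.degree u := by
  obtain ⟨c, hc⟩ := hcrit.2 v₃
  have hv : ∀ y, G.Adj v y ↔ y = v₁ ∨ y = v₂ ∨ y = v₃ := fun y => by
    rw [← mem_neighborSet, hN]
    rfl
  have hv₃ : ∀ y, G.Adj v₃ y ↔ y = v ∨ y = v3s := by
    obtain ⟨w, -, hw⟩ := G.exists_adj_iff_of_degree_eq_two hd3 ((hv v₃).mpr (by simp)).symm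
    obtain rfl : v3s = w := ((hw v3s).mp hadj).resolve_left hne
    exact hw
  obtain ⟨t, htv₃, hw⟩ := G.exists_adj_iff_of_degree_eq_two hd3s hadj.symm
  have hextend : ∀ a b, (∀ y, G.Adj v y ↔ y = a ∨ y = b ∨ y = v₃) → a ≠ v₃ →
      (G.degree b ≤ 2 ∨ ∃ u, G.Adj a u ∧ G.degree u ≤ 1) → False := fun a b hv' ha hcase =>
    hcrit.1 (starEdgeColorable_of_degree_le_two_or_adj_leaf hsub hc hv' ha hv₃ hne.symm hw htv₃
      hcase)
  refine ⟨?_, fun u hu => ?_⟩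
  · by_contra hd₂
    exact hextend v₁ v₂ hv h13 (Or.inl (by have := hsub v₂; omega))
  · by_contra hu₂
    rcases hu with hu | hu
    · exact hextend v₁ v₂ hv h13 (Or.inr ⟨u, hu, by omega⟩)
    · exact hextend v₂ v₁ (fun y => (hv y).trans (by tauto)) h23 (Or.inr ⟨u, hu, by omega⟩)

/-- Corollary 3(b): in the setting of Corollary 3, if `d(v₃*) = 2`, then `d(v₂) = 3`
and every vertex of `N_G(v₁) ∪ N_G(v₂)` has degree at least 2. -/
theorem cor3b {V : Type*} [Fintype V] [DecidableEq V] (G : SimpleGraph V)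
    [DecidableRel G.Adj] (hsub : ∀ u : V, G.degree u ≤ 3)
    (hcrit : StarCritical G 6)
    (v v₁ v₂ v₃ : V) (h12 : v₁ ≠ v₂) (h13 : v₁ ≠ v₃) (h23 : v₂ ≠ v₃)
    (hN : G.neighborSet v = {v₁, v₂, v₃})
    (hd12 : G.degree v₂ ≤ G.degree v₁) (hd23 : G.degree v₃ ≤ G.degree v₂)
    (hd3 : G.degree v₃ = 2)
    (v3s : V) (hadj : G.Adj v₃ v3s) (hne : v3s ≠ v)
    (hd3s : G.degree v3s = 2) :
    G.degree v₂ = 3 ∧ ∀ u ∈ G.neighborSet v₁ ∪ G.neighborSet v₂, 2 ≤ G.degree u :=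
  cor3b_general G hsub hcrit v v₁ v₂ v₃ h13 h23 hN hd3 v3s hadj hne hd3s
end
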